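/- arXiv:1112.0534 — 13 statements merged into one kernel-verified Lean document; each statement's English description precedes it below -/
import Mathlib

section
/- Let y_1, …, y_m be nonnegative real numbers and let B_1, …, B_p be a partition of {1, …, m} into p nonempty blocks. Set x_b = ∑_{i∈B_b} y_i for b = 1, …, p and x_b = 0 for b = p+1, …, m. Then ∑_{b=1}^m x_b = ∑_{i=1}^m y_i, and for every t ∈ {1, …, m} the sum of the t largest values among x_1, …, x_m is at least the sum of the t largest values among y_1, …, y_m. -/
/-!
Choose for every index `i` a block `g i` containing it. A set `A` of `t` indices meets at most
`t` blocks, namely those in `A.image g`, and by nonnegativity `∑_{i ∈ A} y i` is at most the sum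
of the block sums over them; padding these at most `t` blocks to exactly `t` entries of `x`
can only increase the sum further.
-/

open Finset Function

section OrderedMonoid

variable {α β M : Type*} [AddCommMonoid M] [PartialOrder M] [IsOrderedAddMonoid M]

lemma sum_le_sum_image_sum_blocks [DecidableEq β] {y : α → M} (hy : ∀ i, 0 ≤ y i)
    {B : β → Finset α} {g : α → β} (hg : ∀ i, i ∈ B (g i)) (A : Finset α) :
    ∑ i ∈ A, y i ≤ ∑ b ∈ A.image g, ∑ i ∈ B b, y i := by
  rw [← sum_fiberwise_of_maps_to (fun i hi => mem_image_of_mem g hi) y]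
  refine sum_le_sum fun b _ => sum_le_sum_of_subset_of_nonneg ?_ fun i _ _ => hy i
  intro i hi
  obtain ⟨-, rfl⟩ := mem_filter.mp hi
  exact hg i

lemma exists_mem_powersetCard_sum_le [Fintype α] {x : α → M}
    (hx : ∀ i, 0 ≤ x i) {T : Finset α} {t : ℕ} (hT : #T ≤ t) (ht : t ≤ Fintype.card α) :
    ∃ A ∈ (univ : Finset α).powersetCard t, ∑ i ∈ T, x i ≤ ∑ i ∈ A, x i := by
  obtain ⟨A, hTA, -, hA⟩ := exists_subsuperset_card_eq (subset_univ T) hT (by simpa using ht)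
  exact ⟨A, mem_powersetCard.mpr ⟨subset_univ A, hA⟩,
    sum_le_sum_of_subset_of_nonneg hTA fun i _ _ => hx i⟩

end OrderedMonoid

lemma sum_sum_blocks_eq_sum_univ {α β M : Type*} [Fintype α] [Fintype β] [DecidableEq α]
    [AddCommMonoid M] {B : β → Finset α} (hdisj : Pairwise (Disjoint on B))
    (hcover : ∀ i, ∃ b, i ∈ B b) (y : α → M) :
    ∑ b, ∑ i ∈ B b, y i = ∑ i, y i := by
  rw [← sum_biUnion (hdisj.set_pairwise _)]
  refine sum_congr (eq_univ_of_forall fun i => ?_) fun _ _ => rfl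
  simpa using hcover i

section ZeroPadding

variable {M : Type*} [AddCommMonoid M] {m p : ℕ} (hpm : p ≤ m) {f : Fin p → M}
  {x : Fin m → M} (hx : ∀ b : Fin m, x b = if h : (b : ℕ) < p then f ⟨b, h⟩ else 0)
include hpm hx

lemma sum_map_castLEEmb_of_eq_dite (T : Finset (Fin p)) :
    ∑ b ∈ T.map (Fin.castLEEmb hpm), x b = ∑ b ∈ T, f b := by
  simp [hx]

lemma sum_univ_of_eq_dite : ∑ b, x b = ∑ b, f b := by
  rw [← sum_map_castLEEmb_of_eq_dite hpm hx univ]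
  refine (sum_subset (subset_univ _) fun b _ hb => ?_).symm
  rw [hx, dif_neg]
  exact fun hlt => hb (mem_map.mpr ⟨⟨b, hlt⟩, mem_univ _, Fin.ext rfl⟩)

end ZeroPadding

theorem stmt_1_general (m p : ℕ) (hpm : p ≤ m)
    (y : Fin m → ℝ) (hy : ∀ i, 0 ≤ y i)
    (B : Fin p → Finset (Fin m))
    (hdisj : ∀ b₁ b₂, b₁ ≠ b₂ → Disjoint (B b₁) (B b₂))
    (hcover : ∀ i : Fin m, ∃ b, i ∈ B b)
    (x : Fin m → ℝ)
    (hx : ∀ b : Fin m, x b = if h : (b : ℕ) < p then ∑ i ∈ B ⟨b, h⟩, y i else 0) :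
    (∑ b, x b = ∑ i, y i) ∧
    ∀ t : ℕ, 1 ≤ t → t ≤ m →
      ∀ h : ((Finset.univ : Finset (Fin m)).powersetCard t).Nonempty,
      ((Finset.univ : Finset (Fin m)).powersetCard t).sup' h (fun A => ∑ i ∈ A, y i) ≤
      ((Finset.univ : Finset (Fin m)).powersetCard t).sup' h (fun A => ∑ i ∈ A, x i) := by
  set blockSum : Fin p → ℝ := fun b => ∑ i ∈ B b, y i
  refine ⟨(sum_univ_of_eq_dite hpm (f := blockSum) hx).trans
    (sum_sum_blocks_eq_sum_univ hdisj hcover y), ?_⟩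
  intro t _ htm h
  choose g hg using hcover
  have hx_nonneg (b : Fin m) : 0 ≤ x b := by
    rw [hx]
    split_ifs
    exacts [sum_nonneg fun i _ => hy i, le_rfl]
  refine sup'_le _ _ fun A hA => ?_
  have hcard : #((A.image g).map (Fin.castLEEmb hpm)) ≤ t := by
    rw [card_map, ← (mem_powersetCard.mp hA).2]
    exact card_image_le
  obtain ⟨A', hA', hle⟩ :=
    exists_mem_powersetCard_sum_le hx_nonneg hcard (by simpa using htm)
  calc ∑ i ∈ A, y i ≤ ∑ b ∈ A.image g, ∑ i ∈ B b, y i :=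
        sum_le_sum_image_sum_blocks hy hg A
    _ = ∑ b ∈ (A.image g).map (Fin.castLEEmb hpm), x b :=
        (sum_map_castLEEmb_of_eq_dite hpm (f := blockSum) hx _).symm
    _ ≤ ∑ b ∈ A', x b := hle
    _ ≤ _ := le_sup' (fun A => ∑ i ∈ A, x i) hA'

/-- Majorization property of block sums: if `x` is obtained from a nonnegative list `y`
by summing over the blocks of a partition (padded with zeros), then `x` and `y` have the
same total sum and, for every `t`, the sum of the `t` largest entries of `x` (i.e. the
maximum of `∑_{i ∈ A} x i` over subsets `A` of cardinality `t`) is at least that of `y`. -/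
theorem stmt_1 (m p : ℕ) (hp : 0 < p) (hpm : p ≤ m)
    (y : Fin m → ℝ) (hy : ∀ i, 0 ≤ y i)
    (B : Fin p → Finset (Fin m))
    (hne : ∀ b, (B b).Nonempty)
    (hdisj : ∀ b₁ b₂, b₁ ≠ b₂ → Disjoint (B b₁) (B b₂))
    (hcover : ∀ i : Fin m, ∃ b, i ∈ B b)
    (x : Fin m → ℝ)
    (hx : ∀ b : Fin m, x b = if h : (b : ℕ) < p then ∑ i ∈ B ⟨b, h⟩, y i else 0) :
    (∑ b, x b = ∑ i, y i) ∧
    ∀ t : ℕ, 1 ≤ t → t ≤ m →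
      ∀ h : ((Finset.univ : Finset (Fin m)).powersetCard t).Nonempty,
      ((Finset.univ : Finset (Fin m)).powersetCard t).sup' h (fun A => ∑ i ∈ A, y i) ≤
      ((Finset.univ : Finset (Fin m)).powersetCard t).sup' h (fun A => ∑ i ∈ A, x i) :=
  stmt_1_general m p hpm y hy B hdisj hcover x hx
end

section
/- Let y_1, …, y_m be nonnegative real numbers and let B_1, …, B_p be a partition of {1, …, m} into p nonempty blocks; set x_b = ∑_{i∈B_b} y_i for b = 1, …, p. Then for every continuous convex function f : ℝ → ℝ one has ∑_{b=1}^p f(x_b) + (m − p)·f(0) ≥ ∑_{i=1}^m f(y_i). -/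
/-!
For convex `f`, the function `t ↦ f t - f 0` is superadditive on `[0, ∞)`, since `a` and `b` are
convex combinations of `0` and `a + b`. Iterating over a block `B` gives
`∑ i ∈ B, f (y i) ≤ f (∑ i ∈ B, y i) + (#B - 1) * f 0`, and summing over the blocks, whose
cardinalities add up to `m`, gives the claim.
-/

open Finset

lemma ConvexOn.map_add_map_le_map_add_add_map_zero {f : ℝ → ℝ}
    (hf : ConvexOn ℝ (Set.Ici 0) f) {a b : ℝ} (ha : 0 ≤ a) (hb : 0 ≤ b) :
    f a + f b ≤ f (a + b) + f 0 := by
  rcases (add_nonneg ha hb).eq_or_lt with hab | hab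
  · obtain rfl : a = 0 := by linarith
    obtain rfl : b = 0 := by linarith
    simp
  have hweights : a / (a + b) + b / (a + b) = 1 := by field_simp
  have hcombo {u v : ℝ} (hu : 0 ≤ u) (hv : 0 ≤ v) (huv : u / (a + b) + v / (a + b) = 1) :
      f u ≤ u / (a + b) * f (a + b) + v / (a + b) * f 0 := by
    have key := hf.2 (Set.mem_Ici.2 hab.le) Set.self_mem_Ici
      (div_nonneg hu hab.le) (div_nonneg hv hab.le) huv
    have hpoint : u / (a + b) * (a + b) + v / (a + b) * 0 = u := by
      rw [mul_zero, add_zero, div_mul_cancel₀ u hab.ne']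
    simpa only [smul_eq_mul, hpoint] using key
  have hfa := hcombo ha hb hweights
  have hfb := hcombo hb ha (by linarith)
  linear_combination hfa + hfb + (f (a + b) + f 0) * hweights

lemma ConvexOn.sum_map_le_map_sum_add_card_mul {ι : Type*} {f : ℝ → ℝ}
    (hf : ConvexOn ℝ (Set.Ici 0) f) (s : Finset ι) {y : ι → ℝ} (hy : ∀ i ∈ s, 0 ≤ y i) :
    ∑ i ∈ s, f (y i) ≤ f (∑ i ∈ s, y i) + ((#s : ℝ) - 1) * f 0 := by
  classical
  induction s using Finset.induction_on with
  | empty => simp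
  | insert a t ha ih =>
    have hyt : ∀ i ∈ t, 0 ≤ y i := fun i hi => hy i (mem_insert_of_mem hi)
    have hsuper := hf.map_add_map_le_map_add_add_map_zero (hy a (mem_insert_self a t))
      (sum_nonneg hyt)
    rw [sum_insert ha, sum_insert ha, card_insert_of_notMem ha]
    push_cast
    linarith [ih hyt]

theorem stmt_2_general (m p : ℕ)
    (y : Fin m → ℝ) (hy : ∀ i, 0 ≤ y i)
    (B : Fin p → Finset (Fin m))
    (hdisj : ∀ b₁ b₂, b₁ ≠ b₂ → Disjoint (B b₁) (B b₂))
    (hcover : ∀ i : Fin m, ∃ b, i ∈ B b)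
    (x : Fin p → ℝ) (hx : ∀ b, x b = ∑ i ∈ B b, y i)
    (f : ℝ → ℝ) (hconv : ConvexOn ℝ Set.univ f) :
    ∑ i, f (y i) ≤ ∑ b, f (x b) + ((m : ℝ) - p) * f 0 := by
  have hpd : Set.PairwiseDisjoint (univ : Finset (Fin p)) B :=
    fun b₁ _ b₂ _ h => hdisj b₁ b₂ h
  have hunion : univ.biUnion B = univ := eq_univ_of_forall fun i => by simpa using hcover i
  have hcard : ∑ b, (#(B b) : ℝ) = m := by
    rw [← Nat.cast_sum, ← card_biUnion hpd, hunion, card_univ, Fintype.card_fin]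
  have hblock (b : Fin p) : ∑ i ∈ B b, f (y i) ≤ f (x b) + ((#(B b) : ℝ) - 1) * f 0 :=
    hx b ▸ (hconv.subset (Set.subset_univ _) (convex_Ici 0)).sum_map_le_map_sum_add_card_mul
      (B b) fun i _ => hy i
  calc ∑ i, f (y i) = ∑ b, ∑ i ∈ B b, f (y i) := by rw [← sum_biUnion hpd, hunion]
    _ ≤ ∑ b, (f (x b) + ((#(B b) : ℝ) - 1) * f 0) := sum_le_sum fun b _ => hblock b
    _ = ∑ b, f (x b) + ((m : ℝ) - p) * f 0 := by
      rw [sum_add_distrib, ← sum_mul, sum_sub_distrib, hcard]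
      simp

/-- If `x : Fin p → ℝ` consists of the block sums of a nonnegative list `y : Fin m → ℝ`
over a partition of `Fin m` into `p` nonempty blocks, then for every continuous convex
`f : ℝ → ℝ` we have `∑_{b} f (x b) + (m - p) * f 0 ≥ ∑_i f (y i)`. -/
theorem stmt_2 (m p : ℕ) (hp : 0 < p)
    (y : Fin m → ℝ) (hy : ∀ i, 0 ≤ y i)
    (B : Fin p → Finset (Fin m))
    (hne : ∀ b, (B b).Nonempty)
    (hdisj : ∀ b₁ b₂, b₁ ≠ b₂ → Disjoint (B b₁) (B b₂))
    (hcover : ∀ i : Fin m, ∃ b, i ∈ B b)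
    (x : Fin p → ℝ) (hx : ∀ b, x b = ∑ i ∈ B b, y i)
    (f : ℝ → ℝ) (hconv : ConvexOn ℝ Set.univ f) (hcont : Continuous f) :
    ∑ i, f (y i) ≤ ∑ b, f (x b) + ((m : ℝ) - p) * f 0 :=
  stmt_2_general m p y hy B hdisj hcover x hx f hconv
end

section
/- Let I_j = [a_j, b_j), j = 1, …, n, be half-open intervals with a_j ≤ b_j that are agreeable, i.e., a_1 ≤ a_2 ≤ … ≤ a_n and b_1 ≤ b_2 ≤ … ≤ b_n, and let f : ℝ → ℝ be an arbitrary cost function. Set b_0 = a_1 and a_{n+1} = b_n. For integers 0 ≤ i < k ≤ n+1, let C(i,k) denote the minimum, over all orderings of the family of k−i−1 sets { I_j ∩ [b_i, a_k) : i < j < k }, of the cost of the ordering. Then C(i, i+1) = 0, and for k > i+1, C(i,k) = min_{i<j<k} ( C(i,j) + f(λ(I_j ∩ [b_i, a_k))) + C(j,k) ). -/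
open MeasureTheory

/-- The cost of an ordering `α` of the sets `S 1, …, S n`: sum over positions `k` of
`f` applied to the Lebesgue measure of the exposed part of the `k`-th set. -/
noncomputable def exposedCost {n : ℕ} (S : Fin n → Set ℝ) (f : ℝ → ℝ)
    (α : Equiv.Perm (Fin n)) : ℝ :=
  ∑ k : Fin n, f ((volume (S (α k) \ ⋃ (j : Fin n) (_ : j < k), S (α j))).toReal)


section helpers
variable {n : ℕ} {a b : ℕ → ℝ}

lemma amono (hn : 1 ≤ n) (ha : ∀ j, 1 ≤ j → j < n → a j ≤ a (j + 1)) :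
    ∀ j k, 1 ≤ j → j ≤ k → k ≤ n → a j ≤ a k := by
  intro j k h1 h2 h3
  induction k, h2 using Nat.le_induction with
  | base => exact le_refl _
  | succ k hk ih =>
    exact le_trans (ih (by omega)) (ha k (by omega) (by omega))

lemma bmono1 (hn : 1 ≤ n) (hb : ∀ j, 1 ≤ j → j < n → b j ≤ b (j + 1)) :
    ∀ j k, 1 ≤ j → j ≤ k → k ≤ n → b j ≤ b k := by
  intro j k h1 h2 h3
  induction k, h2 using Nat.le_induction with
  | base => exact le_refl _
  | succ k hk ih =>
    exact le_trans (ih (by omega)) (hb k (by omega) (by omega))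

lemma bmono (hn : 1 ≤ n) (hb : ∀ j, 1 ≤ j → j < n → b j ≤ b (j + 1))
    (hb0 : b 0 = a 1) (hab : ∀ j, 1 ≤ j → j ≤ n → a j ≤ b j) :
    ∀ i k, i ≤ k → k ≤ n → b i ≤ b k := by
  intro i k h1 h2
  rcases Nat.eq_zero_or_pos i with rfl | hi
  · rcases Nat.eq_zero_or_pos k with rfl | hk
    · exact le_refl _
    · calc b 0 = a 1 := hb0
        _ ≤ b 1 := hab 1 le_rfl (by omega)
        _ ≤ b k := bmono1 hn hb 1 k le_rfl hk h2
  · exact bmono1 hn hb i k hi h1 h2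

lemma amonoN (hn : 1 ≤ n) (ha : ∀ j, 1 ≤ j → j < n → a j ≤ a (j + 1))
    (hb : ∀ j, 1 ≤ j → j < n → b j ≤ b (j + 1))
    (han : a (n + 1) = b n) (hab : ∀ j, 1 ≤ j → j ≤ n → a j ≤ b j) :
    ∀ j k, 1 ≤ j → j ≤ k → k ≤ n + 1 → a j ≤ a k := by
  intro j k h1 h2 h3
  rcases Nat.lt_or_ge k (n + 1) with h | h
  · exact amono hn ha j k h1 h2 (by omega)
  · have hk : k = n + 1 := by omega
    subst hk
    rcases Nat.lt_or_ge j (n + 1) with hj | hj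
    · calc a j ≤ b j := hab j h1 (by omega)
        _ ≤ b n := bmono1 hn hb j n h1 (by omega) le_rfl
        _ = a (n + 1) := han.symm
    · have : j = n + 1 := by omega
      subst this; exact le_refl _
end helpers

lemma perm_ciInf_le {M : ℕ} (g : Equiv.Perm (Fin M) → ℝ) (β : Equiv.Perm (Fin M)) :
    (⨅ α, g α) ≤ g β :=
  ciInf_le (Set.finite_range g).bddBelow β

lemma perm_ciInf_attained {M : ℕ} (g : Equiv.Perm (Fin M) → ℝ) :
    ∃ β, (⨅ α, g α) = g β := by
  obtain ⟨β, hβ⟩ := Finite.exists_min g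
  exact ⟨β, le_antisymm (perm_ciInf_le g β) (le_ciInf hβ)⟩
lemma cost_decomp {N L R : ℕ} [NeZero N] (S : Fin N → Set ℝ) (f : ℝ → ℝ)
    (α : Equiv.Perm (Fin N)) (p : Fin N) (hα0 : α 0 = p)
    (hLR : ∀ m m' : Fin N, m < p → p < m' → (S m \ S p) ∩ S m' = ∅)
    (hRL : ∀ m m' : Fin N, m < p → p < m' → (S m' \ S p) ∩ S m = ∅)
    (hL : L = p.val) (hR : R = N - p.val - 1)
    (SL : Fin L → Set ℝ)
    (hSL : ∀ s : Fin L, SL s = S ⟨s.val, by have := p.isLt; have := s.isLt; omega⟩ \ S p)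
    (SR : Fin R → Set ℝ)
    (hSR : ∀ s : Fin R, SR s = S ⟨p.val + 1 + s.val, by have := p.isLt; have := s.isLt; omega⟩ \ S p)
    (eL : Fin L → Fin N) (heLmono : StrictMono eL)
    (heL : ∀ t, (α t) < p ↔ ∃ s, eL s = t)
    (σ : Equiv.Perm (Fin L)) (hσ : ∀ s, ((σ s : Fin L) : ℕ) = ((α (eL s) : Fin N) : ℕ))
    (eR : Fin R → Fin N) (heRmono : StrictMono eR)
    (heR : ∀ t, p < α t ↔ ∃ s, eR s = t)
    (τ : Equiv.Perm (Fin R)) (hτ : ∀ s, p.val + 1 + ((τ s : Fin R) : ℕ) = ((α (eR s) : Fin N) : ℕ)) :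
    exposedCost S f α = f ((volume (S p)).toReal) + exposedCost SL f σ + exposedCost SR f τ := by
  classical
  set g : Fin N → ℝ := fun t => f ((volume (S (α t) \ ⋃ (u : Fin N) (_ : u < t), S (α u))).toReal) with hg
  have hsmall : ∀ s, α (eL s) < p := fun s => (heL (eL s)).mpr ⟨s, rfl⟩
  have hbig : ∀ s, p < α (eR s) := fun s => (heR (eR s)).mpr ⟨s, rfl⟩
  have hpos : ∀ t : Fin N, α t ≠ p → (0 : Fin N) < t := by
    intro t ht
    rw [Fin.lt_def, Fin.val_zero]
    rcases Nat.eq_zero_or_pos t.val with h | h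
    · exact absurd (by rw [← hα0]; congr 1; exact Fin.ext h) ht
    · exact h
  have heL0 : ∀ s, (0 : Fin N) < eL s := fun s => hpos _ (ne_of_lt (hsmall s))
  have heR0 : ∀ s, (0 : Fin N) < eR s := fun s => hpos _ (ne_of_gt (hbig s))
  have hidL : ∀ s : Fin L, (⟨(σ s).val, by have := p.isLt; have := (σ s).isLt; omega⟩ : Fin N) = α (eL s) := by
    intro s; apply Fin.ext; simpa using hσ s
  have hidR : ∀ s : Fin R, (⟨p.val + 1 + (τ s).val, by have := p.isLt; have := (τ s).isLt; omega⟩ : Fin N) = α (eR s) := by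
    intro s; apply Fin.ext; simpa using hτ s
  have claim0 : g 0 = f ((volume (S p)).toReal) := by
    have h1 : (⋃ (u : Fin N) (_ : u < (0 : Fin N)), S (α u)) = ∅ := by
      simp [Fin.lt_def]
    have h2 : g 0 = f ((volume (S (α 0) \ ⋃ (u : Fin N) (_ : u < (0 : Fin N)), S (α u))).toReal) := rfl
    rw [h2, h1, hα0, Set.diff_empty]
  have claimL : ∀ s : Fin L, g (eL s)
      = f ((volume (SL (σ s) \ ⋃ (s' : Fin L) (_ : s' < s), SL (σ s'))).toReal) := by
    intro s
    have hSLs : ∀ s' : Fin L, SL (σ s') = S (α (eL s')) \ S p := by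
      intro s'; rw [hSL (σ s'), hidL s']
    have hset : S (α (eL s)) \ (⋃ (u : Fin N) (_ : u < eL s), S (α u))
        = SL (σ s) \ ⋃ (s' : Fin L) (_ : s' < s), SL (σ s') := by
      ext x
      simp only [Set.mem_diff, Set.mem_iUnion, exists_prop, not_exists, not_and, not_not, hSLs]
      constructor
      · rintro ⟨hx, hnot⟩
        exact ⟨⟨hx, hα0 ▸ hnot 0 (heL0 s)⟩,
          fun s' hs' hxs' => absurd hxs' (hnot (eL s') (heLmono hs'))⟩
      · rintro ⟨⟨hx, hxp⟩, hall⟩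
        refine ⟨hx, ?_⟩
        intro u hu hxu
        rcases lt_trichotomy (α u) p with h | h | h
        · obtain ⟨s', rfl⟩ := (heL u).mp h
          exact hxp (hall s' (heLmono.lt_iff_lt.mp hu) hxu)
        · have hu0 : u = 0 := α.injective (by rw [hα0, h])
          rw [hu0, hα0] at hxu
          exact hxp hxu
        · have hE := hLR (α (eL s)) (α u) (hsmall s) h
          have hmem : x ∈ (S (α (eL s)) \ S p) ∩ S (α u) := ⟨⟨hx, hxp⟩, hxu⟩
          rw [hE] at hmem
          exact hmem
    have h2 : g (eL s) = f ((volume (S (α (eL s)) \ ⋃ (u : Fin N) (_ : u < eL s), S (α u))).toReal) := rfl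
    rw [h2, hset]
  have claimR : ∀ s : Fin R, g (eR s)
      = f ((volume (SR (τ s) \ ⋃ (s' : Fin R) (_ : s' < s), SR (τ s'))).toReal) := by
    intro s
    have hSRs : ∀ s' : Fin R, SR (τ s') = S (α (eR s')) \ S p := by
      intro s'; rw [hSR (τ s'), hidR s']
    have hset : S (α (eR s)) \ (⋃ (u : Fin N) (_ : u < eR s), S (α u))
        = SR (τ s) \ ⋃ (s' : Fin R) (_ : s' < s), SR (τ s') := by
      ext x
      simp only [Set.mem_diff, Set.mem_iUnion, exists_prop, not_exists, not_and, not_not, hSRs]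
      constructor
      · rintro ⟨hx, hnot⟩
        exact ⟨⟨hx, hα0 ▸ hnot 0 (heR0 s)⟩,
          fun s' hs' hxs' => absurd hxs' (hnot (eR s') (heRmono hs'))⟩
      · rintro ⟨⟨hx, hxp⟩, hall⟩
        refine ⟨hx, ?_⟩
        intro u hu hxu
        rcases lt_trichotomy (α u) p with h | h | h
        · have hE := hRL (α u) (α (eR s)) h (hbig s)
          have hmem : x ∈ (S (α (eR s)) \ S p) ∩ S (α u) := ⟨⟨hx, hxp⟩, hxu⟩
          rw [hE] at hmem
          exact hmem
        · have hu0 : u = 0 := α.injective (by rw [hα0, h])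
          rw [hu0, hα0] at hxu
          exact hxp hxu
        · obtain ⟨s', rfl⟩ := (heR u).mp h
          exact hxp (hall s' (heRmono.lt_iff_lt.mp hu) hxu)
    have h2 : g (eR s) = f ((volume (S (α (eR s)) \ ⋃ (u : Fin N) (_ : u < eR s), S (α u))).toReal) := rfl
    rw [h2, hset]
  -- partition of the index set
  have hcover : (Finset.univ : Finset (Fin N))
      = insert 0 ((Finset.univ.image eL) ∪ (Finset.univ.image eR)) := by
    ext t
    simp only [Finset.mem_univ, Finset.mem_insert, Finset.mem_union, Finset.mem_image, true_iff]
    rcases lt_trichotomy (α t) p with h | h | h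
    · exact Or.inr (Or.inl (by simpa using (heL t).mp h))
    · exact Or.inl (α.injective (by rw [hα0, h]))
    · exact Or.inr (Or.inr (by simpa using (heR t).mp h))
  have h0notin : (0 : Fin N) ∉ (Finset.univ.image eL) ∪ (Finset.univ.image eR) := by
    simp only [Finset.mem_union, Finset.mem_image, Finset.mem_univ, true_and, not_or, not_exists]
    constructor
    · intro s h; exact absurd h (ne_of_gt (heL0 s))
    · intro s h; exact absurd h (ne_of_gt (heR0 s))
  have hdisj : Disjoint (Finset.univ.image eL) (Finset.univ.image eR) := by
    rw [Finset.disjoint_left]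
    intro t htL htR
    simp only [Finset.mem_image, Finset.mem_univ, true_and] at htL htR
    obtain ⟨s1, rfl⟩ := htL
    obtain ⟨s2, hs2⟩ := htR
    have := hbig s2
    rw [hs2] at this
    exact absurd (hsmall s1) (not_lt_of_gt this)
  have hsum : ∑ t : Fin N, g t = g 0 + ((∑ s : Fin L, g (eL s)) + (∑ s : Fin R, g (eR s))) := by
    rw [hcover, Finset.sum_insert h0notin, Finset.sum_union hdisj,
      Finset.sum_image (fun x _ y _ h => heLmono.injective h),
      Finset.sum_image (fun x _ y _ h => heRmono.injective h)]
  have hfinal : exposedCost S f α = ∑ t : Fin N, g t := rfl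
  rw [hfinal, hsum, claim0]
  have hl : ∑ s : Fin L, g (eL s) = exposedCost SL f σ := by
    rw [exposedCost]; exact Finset.sum_congr rfl (fun s _ => claimL s)
  have hr : ∑ s : Fin R, g (eR s) = exposedCost SR f τ := by
    rw [exposedCost]; exact Finset.sum_congr rfl (fun s _ => claimR s)
  rw [hl, hr]; ring

lemma decomp_sides {N : ℕ} (α : Equiv.Perm (Fin N)) (p : Fin N) {L R : ℕ}
    (hL : L = p.val) (hR : R = N - p.val - 1) :
    ∃ (eL : Fin L → Fin N) (σ : Equiv.Perm (Fin L)) (eR : Fin R → Fin N) (τ : Equiv.Perm (Fin R)),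
      StrictMono eL ∧ (∀ t, α t < p ↔ ∃ s, eL s = t) ∧ (∀ s, ((σ s : Fin L) : ℕ) = ((α (eL s)) : ℕ)) ∧
      StrictMono eR ∧ (∀ t, p < α t ↔ ∃ s, eR s = t) ∧
        (∀ s, p.val + 1 + ((τ s : Fin R) : ℕ) = ((α (eR s)) : ℕ)) := by
  classical
  -- left side
  set T : Finset (Fin N) := Finset.univ.filter (fun t => α t < p) with hT
  have himgT : T.image α = Finset.Iio p := by
    ext m
    simp only [hT, Finset.mem_image, Finset.mem_filter, Finset.mem_univ, true_and, Finset.mem_Iio]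
    constructor
    · rintro ⟨t, ht, rfl⟩; exact ht
    · intro hm; exact ⟨α.symm m, by simpa using hm, by simp⟩
  have hcardT : T.card = L := by
    rw [hL, ← Fin.card_Iio p, ← himgT, Finset.card_image_of_injective T α.injective]
  set e := T.orderIsoOfFin hcardT with he
  set eL : Fin L → Fin N := fun s => (e s : Fin N) with heLdef
  have heLmono : StrictMono eL := fun s1 s2 h => e.strictMono h
  have heLmem : ∀ s, α (eL s) < p := by
    intro s
    have := (e s).2
    simp only [hT, Finset.mem_filter, Finset.mem_univ, true_and] at this
    exact this
  have heLiff : ∀ t, α t < p ↔ ∃ s, eL s = t := by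
    intro t
    constructor
    · intro h
      have hmem : t ∈ T := by simp [hT, h]
      exact ⟨e.symm ⟨t, hmem⟩, by simp [heLdef]⟩
    · rintro ⟨s, rfl⟩; exact heLmem s
  have hσinj : Function.Injective (fun s : Fin L => (⟨(α (eL s)).val, by
      have := heLmem s; rw [Fin.lt_def] at this; omega⟩ : Fin L)) := by
    intro s1 s2 h
    have : (α (eL s1)).val = (α (eL s2)).val := by
      simpa [Fin.mk.injEq] using h
    exact heLmono.injective (α.injective (Fin.ext this))
  set σ : Equiv.Perm (Fin L) :=
    Equiv.ofBijective _ (Finite.injective_iff_bijective.mp hσinj) with hσdef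
  have hσ : ∀ s, ((σ s : Fin L) : ℕ) = ((α (eL s)) : ℕ) := fun s => rfl
  -- right side
  set T' : Finset (Fin N) := Finset.univ.filter (fun t => p < α t) with hT'
  have himgT' : T'.image α = Finset.Ioi p := by
    ext m
    simp only [hT', Finset.mem_image, Finset.mem_filter, Finset.mem_univ, true_and, Finset.mem_Ioi]
    constructor
    · rintro ⟨t, ht, rfl⟩; exact ht
    · intro hm; exact ⟨α.symm m, by simpa using hm, by simp⟩
  have hcardT' : T'.card = R := by
    rw [hR, ← Finset.card_image_of_injective T' α.injective, himgT', Fin.card_Ioi]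
    omega
  set e' := T'.orderIsoOfFin hcardT' with he'
  set eR : Fin R → Fin N := fun s => (e' s : Fin N) with heRdef
  have heRmono : StrictMono eR := fun s1 s2 h => e'.strictMono h
  have heRmem : ∀ s, p < α (eR s) := by
    intro s
    have := (e' s).2
    simp only [hT', Finset.mem_filter, Finset.mem_univ, true_and] at this
    exact this
  have heRiff : ∀ t, p < α t ↔ ∃ s, eR s = t := by
    intro t
    constructor
    · intro h
      have hmem : t ∈ T' := by simp [hT', h]
      exact ⟨e'.symm ⟨t, hmem⟩, by simp [heRdef]⟩
    · rintro ⟨s, rfl⟩; exact heRmem s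
  have hτinj : Function.Injective (fun s : Fin R => (⟨(α (eR s)).val - p.val - 1, by
      have h1 := heRmem s; rw [Fin.lt_def] at h1
      have h2 := (α (eR s)).isLt
      have := p.isLt; omega⟩ : Fin R)) := by
    intro s1 s2 h
    have h1 := heRmem s1; rw [Fin.lt_def] at h1
    have h2 := heRmem s2; rw [Fin.lt_def] at h2
    have : (α (eR s1)).val = (α (eR s2)).val := by
      have := congrArg Fin.val h
      simp only at this
      omega
    exact heRmono.injective (α.injective (Fin.ext this))
  set τ : Equiv.Perm (Fin R) :=
    Equiv.ofBijective _ (Finite.injective_iff_bijective.mp hτinj) with hτdef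
  have hτ : ∀ s, p.val + 1 + ((τ s : Fin R) : ℕ) = ((α (eR s)) : ℕ) := by
    intro s
    have h1 := heRmem s; rw [Fin.lt_def] at h1
    show p.val + 1 + ((α (eR s)).val - p.val - 1) = (α (eR s)).val
    omega
  exact ⟨eL, σ, eR, τ, heLmono, heLiff, hσ, heRmono, heRiff, hτ⟩

lemma build_perm {N L R : ℕ} [NeZero N] (hN : N = L + R + 1)
    (σ : Equiv.Perm (Fin L)) (τ : Equiv.Perm (Fin R)) (p : Fin N) (hp : p.val = L) :
    ∃ α : Equiv.Perm (Fin N), α 0 = p ∧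
      ∃ (eL : Fin L → Fin N) (eR : Fin R → Fin N),
        StrictMono eL ∧ (∀ t, α t < p ↔ ∃ s, eL s = t) ∧
          (∀ s, ((σ s : Fin L) : ℕ) = ((α (eL s)) : ℕ)) ∧
        StrictMono eR ∧ (∀ t, p < α t ↔ ∃ s, eR s = t) ∧
          (∀ s, p.val + 1 + ((τ s : Fin R) : ℕ) = ((α (eR s)) : ℕ)) := by
  classical
  set α0 : Fin N → Fin N := fun t =>
    if h : t.val = 0 then p
    else if h2 : t.val ≤ L then
      ⟨(σ ⟨t.val - 1, by omega⟩).val, by have := (σ ⟨t.val - 1, by omega⟩).isLt; omega⟩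
    else
      ⟨L + 1 + (τ ⟨t.val - L - 1, by have := t.isLt; omega⟩).val,
        by have := (τ ⟨t.val - L - 1, by have := t.isLt; omega⟩).isLt; have := t.isLt; omega⟩
    with hα0def
  have hv0 : ∀ t : Fin N, t.val = 0 → α0 t = p := by
    intro t h; simp only [hα0def]; rw [dif_pos h]
  have hvL : ∀ (t : Fin N) (h1 : ¬ t.val = 0) (h2 : t.val ≤ L),
      (α0 t).val = (σ ⟨t.val - 1, by omega⟩).val := by
    intro t h1 h2; simp only [hα0def]; rw [dif_neg h1, dif_pos h2]
  have hvR : ∀ (t : Fin N) (h2 : ¬ t.val ≤ L),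
      (α0 t).val = L + 1 + (τ ⟨t.val - L - 1, by have := t.isLt; omega⟩).val := by
    intro t h2
    have h1 : ¬ t.val = 0 := by omega
    simp only [hα0def]; rw [dif_neg h1, dif_neg h2]
  have hinj : Function.Injective α0 := by
    intro t1 t2 h
    have hval := congrArg Fin.val h
    by_cases ha : t1.val = 0 <;> by_cases hb : t2.val = 0
    · exact Fin.ext (by omega)
    · exfalso
      rw [hv0 t1 ha] at hval
      by_cases hb2 : t2.val ≤ L
      · have := hvL t2 hb hb2
        have hlt := (σ ⟨t2.val - 1, by omega⟩).isLt
        omega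
      · have := hvR t2 hb2
        omega
    · exfalso
      rw [hv0 t2 hb] at hval
      by_cases ha2 : t1.val ≤ L
      · have := hvL t1 ha ha2
        have hlt := (σ ⟨t1.val - 1, by omega⟩).isLt
        omega
      · have := hvR t1 ha2
        omega
    · by_cases ha2 : t1.val ≤ L <;> by_cases hb2 : t2.val ≤ L
      · have e1 := hvL t1 ha ha2
        have e2 := hvL t2 hb hb2
        have : σ ⟨t1.val - 1, by omega⟩ = σ ⟨t2.val - 1, by omega⟩ := Fin.ext (by omega)
        have := σ.injective this
        have := congrArg Fin.val this
        simp only at this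
        exact Fin.ext (by omega)
      · exfalso
        have e1 := hvL t1 ha ha2
        have e2 := hvR t2 hb2
        have hlt := (σ ⟨t1.val - 1, by omega⟩).isLt
        omega
      · exfalso
        have e1 := hvR t1 ha2
        have e2 := hvL t2 hb hb2
        have hlt := (σ ⟨t2.val - 1, by omega⟩).isLt
        omega
      · have e1 := hvR t1 ha2
        have e2 := hvR t2 hb2
        have : τ ⟨t1.val - L - 1, by have := t1.isLt; omega⟩
            = τ ⟨t2.val - L - 1, by have := t2.isLt; omega⟩ := Fin.ext (by omega)
        have := τ.injective this
        have := congrArg Fin.val this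
        simp only at this
        exact Fin.ext (by omega)
  set α : Equiv.Perm (Fin N) := Equiv.ofBijective α0 (Finite.injective_iff_bijective.mp hinj)
    with hαdef
  have hαapp : ∀ t, α t = α0 t := fun t => rfl
  have hα0 : α 0 = p := by rw [hαapp]; exact hv0 0 rfl
  set eL : Fin L → Fin N := fun s => ⟨s.val + 1, by have := s.isLt; omega⟩ with heLdef
  set eR : Fin R → Fin N := fun s => ⟨L + 1 + s.val, by have := s.isLt; omega⟩ with heRdef
  have heLmono : StrictMono eL := by
    intro s1 s2 h; rw [Fin.lt_def] at h ⊢; simp only [heLdef]; omega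
  have heRmono : StrictMono eR := by
    intro s1 s2 h; rw [Fin.lt_def] at h ⊢; simp only [heRdef]; omega
  have hσv : ∀ s : Fin L, ((σ s : Fin L) : ℕ) = ((α (eL s)) : ℕ) := by
    intro s
    rw [hαapp]
    have hval : (eL s).val = s.val + 1 := rfl
    have h1 : ¬ (eL s).val = 0 := by omega
    have h2 : (eL s).val ≤ L := by have := s.isLt; omega
    have e : (α0 (eL s)).val = (σ ⟨(eL s).val - 1, by omega⟩).val := hvL (eL s) h1 h2
    have harg : (σ (⟨(eL s).val - 1, by omega⟩ : Fin L)).val = (σ s).val := by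
      have hh : (⟨(eL s).val - 1, by omega⟩ : Fin L) = s := Fin.ext (by
        show (eL s).val - 1 = s.val; omega)
      rw [hh]
    omega
  have hτv : ∀ s : Fin R, p.val + 1 + ((τ s : Fin R) : ℕ) = ((α (eR s)) : ℕ) := by
    intro s
    rw [hαapp]
    have hval : (eR s).val = L + 1 + s.val := rfl
    have h2 : ¬ (eR s).val ≤ L := by omega
    have e : (α0 (eR s)).val
        = L + 1 + (τ ⟨(eR s).val - L - 1, by have := (eR s).isLt; omega⟩).val := hvR (eR s) h2
    have harg : (τ (⟨(eR s).val - L - 1, by have := (eR s).isLt; omega⟩ : Fin R)).val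
        = (τ s).val := by
      have hh : (⟨(eR s).val - L - 1, by have := (eR s).isLt; omega⟩ : Fin R) = s := Fin.ext (by
        show (eR s).val - L - 1 = s.val; omega)
      rw [hh]
    omega
  have hvals : ∀ t : Fin N, ((α t) < p ↔ 1 ≤ t.val ∧ t.val ≤ L)
      ∧ (p < α t ↔ L + 1 ≤ t.val) := by
    intro t
    rw [hαapp, Fin.lt_def, Fin.lt_def, hp]
    by_cases h0 : t.val = 0
    · rw [hv0 t h0]
      constructor
      · constructor
        · intro h; exact absurd h (by rw [hp]; omega)
        · intro h; omega
      · constructor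
        · intro h; rw [hp] at h; omega
        · intro h; omega
    · by_cases h2 : t.val ≤ L
      · have := hvL t h0 h2
        have hlt := (σ ⟨t.val - 1, by omega⟩).isLt
        constructor
        · constructor <;> intro <;> omega
        · constructor <;> intro <;> omega
      · have := hvR t h2
        constructor
        · constructor <;> intro <;> omega
        · constructor <;> intro <;> omega
  have heLiff : ∀ t, α t < p ↔ ∃ s, eL s = t := by
    intro t
    rw [(hvals t).1]
    constructor
    · intro h
      exact ⟨⟨t.val - 1, by omega⟩, Fin.ext (by simp only [heLdef]; omega)⟩
    · rintro ⟨s, rfl⟩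
      simp only [heLdef]
      have := s.isLt; omega
  have heRiff : ∀ t, p < α t ↔ ∃ s, eR s = t := by
    intro t
    rw [(hvals t).2]
    constructor
    · intro h
      have := t.isLt
      exact ⟨⟨t.val - L - 1, by omega⟩, Fin.ext (by simp only [heRdef]; omega)⟩
    · rintro ⟨s, rfl⟩
      simp only [heRdef]
      omega
  exact ⟨α, hα0, eL, eR, heLmono, heLiff, hσv, heRmono, heRiff, hτv⟩

/-- Dynamic-programming recursion for agreeable intervals: with `C i k` the optimal cost
of ordering the family `{ I_j ∩ [b_i, a_k) : i < j < k }`, we have `C i (i+1) = 0` and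
`C i k = min_{i<j<k} (C i j + f (λ(I_j ∩ [b_i, a_k))) + C j k)` for `k > i + 1`. -/
theorem stmt_3 (n : ℕ) (hn : 1 ≤ n) (a b : ℕ → ℝ)
    (hab : ∀ j, 1 ≤ j → j ≤ n → a j ≤ b j)
    (ha : ∀ j, 1 ≤ j → j < n → a j ≤ a (j + 1))
    (hb : ∀ j, 1 ≤ j → j < n → b j ≤ b (j + 1))
    (hb0 : b 0 = a 1) (han : a (n + 1) = b n)
    (f : ℝ → ℝ)
    (C : ℕ → ℕ → ℝ)
    (hC : ∀ i k, i < k → k ≤ n + 1 →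
      C i k = ⨅ α : Equiv.Perm (Fin (k - i - 1)),
        exposedCost
          (fun j => Set.Ico (a (i + 1 + (j : ℕ))) (b (i + 1 + (j : ℕ))) ∩
            Set.Ico (b i) (a k)) f α) :
    (∀ i, i ≤ n → C i (i + 1) = 0) ∧
    (∀ i k (h1 : i + 1 < k) (h2 : k ≤ n + 1),
      C i k = (Finset.Ioo i k).inf'
        ⟨i + 1, Finset.mem_Ioo.mpr ⟨Nat.lt_succ_self i, by omega⟩⟩
        (fun j => C i j +
          f ((volume (Set.Ico (a j) (b j) ∩ Set.Ico (b i) (a k))).toReal) + C j k)) := by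
  constructor
  · -- part 1
    intro i hi
    rw [hC i (i + 1) (by omega) (by omega)]
    have h0 : (i + 1) - i - 1 = 0 := by omega
    haveI : IsEmpty (Fin ((i + 1) - i - 1)) := by rw [h0]; infer_instance
    have hconst : ∀ α : Equiv.Perm (Fin ((i + 1) - i - 1)),
        exposedCost (fun j => Set.Ico (a (i + 1 + (j : ℕ))) (b (i + 1 + (j : ℕ))) ∩
            Set.Ico (b i) (a (i + 1))) f α = 0 := by
      intro α
      rw [exposedCost]
      simp
    calc (⨅ α : Equiv.Perm (Fin ((i + 1) - i - 1)),
          exposedCost (fun j => Set.Ico (a (i + 1 + (j : ℕ))) (b (i + 1 + (j : ℕ))) ∩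
            Set.Ico (b i) (a (i + 1))) f α)
        = ⨅ _ : Equiv.Perm (Fin ((i + 1) - i - 1)), (0 : ℝ) := by
          exact congrArg _ (funext hconst)
      _ = 0 := ciInf_const
  · -- part 2
    intro i k h1 h2
    haveI : NeZero (k - i - 1) := ⟨by omega⟩
    set Sfam : Fin (k - i - 1) → Set ℝ :=
      fun j => Set.Ico (a (i + 1 + (j : ℕ))) (b (i + 1 + (j : ℕ))) ∩
        Set.Ico (b i) (a k) with hSfam
    have hCik : C i k = ⨅ α : Equiv.Perm (Fin (k - i - 1)), exposedCost Sfam f α :=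
      hC i k (by omega) h2
    have main : ∀ j, i < j → j < k →
        (∀ (σ : Equiv.Perm (Fin (j - i - 1))) (τ : Equiv.Perm (Fin (k - j - 1))),
          ∃ α : Equiv.Perm (Fin (k - i - 1)),
            exposedCost Sfam f α
              = f ((volume (Set.Ico (a j) (b j) ∩ Set.Ico (b i) (a k))).toReal)
                + exposedCost (fun s : Fin (j - i - 1) =>
                    Set.Ico (a (i + 1 + (s : ℕ))) (b (i + 1 + (s : ℕ))) ∩
                      Set.Ico (b i) (a j)) f σ
                + exposedCost (fun s : Fin (k - j - 1) =>
                    Set.Ico (a (j + 1 + (s : ℕ))) (b (j + 1 + (s : ℕ))) ∩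
                      Set.Ico (b j) (a k)) f τ) ∧
        (∀ α : Equiv.Perm (Fin (k - i - 1)), ((α 0 : Fin (k - i - 1)) : ℕ) = j - i - 1 →
          ∃ (σ : Equiv.Perm (Fin (j - i - 1))) (τ : Equiv.Perm (Fin (k - j - 1))),
            exposedCost Sfam f α
              = f ((volume (Set.Ico (a j) (b j) ∩ Set.Ico (b i) (a k))).toReal)
                + exposedCost (fun s : Fin (j - i - 1) =>
                    Set.Ico (a (i + 1 + (s : ℕ))) (b (i + 1 + (s : ℕ))) ∩
                      Set.Ico (b i) (a j)) f σ
                + exposedCost (fun s : Fin (k - j - 1) =>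
                    Set.Ico (a (j + 1 + (s : ℕ))) (b (j + 1 + (s : ℕ))) ∩
                      Set.Ico (b j) (a k)) f τ) := by
      intro j hj1 hj2
      have hjn : j ≤ n := by omega
      have hplt : j - i - 1 < k - i - 1 := by omega
      set p : Fin (k - i - 1) := ⟨j - i - 1, hplt⟩ with hp
      have hSp : Sfam p = Set.Ico (a j) (b j) ∩ Set.Ico (b i) (a k) := by
        rw [hSfam]
        show Set.Ico (a (i + 1 + (j - i - 1))) (b (i + 1 + (j - i - 1))) ∩ _ = _
        rw [show i + 1 + (j - i - 1) = j from by omega]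
      have F1 : ∀ (mv : ℕ) (hv : mv < k - i - 1), mv < j - i - 1 →
          Sfam ⟨mv, hv⟩ \ Sfam p
            = Set.Ico (a (i + 1 + mv)) (b (i + 1 + mv)) ∩ Set.Ico (b i) (a j) := by
        intro mv hv hmv
        have hbm : b (i + 1 + mv) ≤ b j :=
          bmono1 hn hb (i + 1 + mv) j (by omega) (by omega) hjn
        have haj : a j ≤ a k := amonoN hn ha hb han hab j k (by omega) (by omega) h2
        rw [hSp, hSfam]
        show (Set.Ico (a (i + 1 + mv)) (b (i + 1 + mv)) ∩ Set.Ico (b i) (a k)) \ _ = _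
        ext x
        simp only [Set.mem_diff, Set.mem_inter_iff, Set.mem_Ico]
        constructor
        · rintro ⟨⟨⟨ha1, ha2⟩, hb1, hb2⟩, hnot⟩
          refine ⟨⟨ha1, ha2⟩, hb1, ?_⟩
          by_contra hcon
          push_neg at hcon
          exact hnot ⟨⟨hcon, by linarith⟩, hb1, hb2⟩
        · rintro ⟨⟨ha1, ha2⟩, hb1, hb2⟩
          refine ⟨⟨⟨ha1, ha2⟩, hb1, by linarith⟩, ?_⟩
          rintro ⟨⟨hc1, hc2⟩, -⟩
          linarith
      have F2 : ∀ (mv : ℕ) (hv : mv < k - i - 1), j - i - 1 < mv →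
          Sfam ⟨mv, hv⟩ \ Sfam p
            = Set.Ico (a (i + 1 + mv)) (b (i + 1 + mv)) ∩ Set.Ico (b j) (a k) := by
        intro mv hv hmv
        have ham : a j ≤ a (i + 1 + mv) :=
          amono hn ha j (i + 1 + mv) (by omega) (by omega) (by omega)
        have hbij : b i ≤ b j := bmono hn hb hb0 hab i j (by omega) hjn
        rw [hSp, hSfam]
        show (Set.Ico (a (i + 1 + mv)) (b (i + 1 + mv)) ∩ Set.Ico (b i) (a k)) \ _ = _
        ext x
        simp only [Set.mem_diff, Set.mem_inter_iff, Set.mem_Ico]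
        constructor
        · rintro ⟨⟨⟨ha1, ha2⟩, hb1, hb2⟩, hnot⟩
          refine ⟨⟨ha1, ha2⟩, ?_, hb2⟩
          by_contra hcon
          push_neg at hcon
          exact hnot ⟨⟨by linarith, hcon⟩, hb1, hb2⟩
        · rintro ⟨⟨ha1, ha2⟩, hb1, hb2⟩
          refine ⟨⟨⟨ha1, ha2⟩, by linarith, hb2⟩, ?_⟩
          rintro ⟨⟨hc1, hc2⟩, -⟩
          linarith
      have hLR : ∀ m m' : Fin (k - i - 1), m < p → p < m' →
          (Sfam m \ Sfam p) ∩ Sfam m' = ∅ := by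
        rintro ⟨mv, hv⟩ ⟨mv', hv'⟩ hm hm'
        rw [Fin.lt_def] at hm hm'
        have hmv : mv < j - i - 1 := hm
        have hmv' : j - i - 1 < mv' := hm'
        have ham' : a j ≤ a (i + 1 + mv') :=
          amono hn ha j (i + 1 + mv') (by omega) (by omega) (by omega)
        rw [F1 mv hv hmv, hSfam]
        apply Set.eq_empty_iff_forall_notMem.mpr
        intro x hx
        simp only [Set.mem_inter_iff, Set.mem_Ico] at hx
        obtain ⟨⟨-, -, hxj⟩, ⟨hx1, -⟩, -⟩ := hx
        have : a (i + 1 + mv') ≤ x := hx1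
        linarith
      have hRL : ∀ m m' : Fin (k - i - 1), m < p → p < m' →
          (Sfam m' \ Sfam p) ∩ Sfam m = ∅ := by
        rintro ⟨mv, hv⟩ ⟨mv', hv'⟩ hm hm'
        rw [Fin.lt_def] at hm hm'
        have hmv : mv < j - i - 1 := hm
        have hmv' : j - i - 1 < mv' := hm'
        have hbm : b (i + 1 + mv) ≤ b j :=
          bmono1 hn hb (i + 1 + mv) j (by omega) (by omega) hjn
        rw [F2 mv' hv' hmv', hSfam]
        apply Set.eq_empty_iff_forall_notMem.mpr
        intro x hx
        simp only [Set.mem_inter_iff, Set.mem_Ico] at hx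
        obtain ⟨⟨-, hbj, -⟩, ⟨-, hx2⟩, -⟩ := hx
        have : x < b (i + 1 + mv) := hx2
        linarith
      have hSL : ∀ s : Fin (j - i - 1),
          (fun s : Fin (j - i - 1) =>
            Set.Ico (a (i + 1 + (s : ℕ))) (b (i + 1 + (s : ℕ))) ∩
              Set.Ico (b i) (a j)) s
            = Sfam ⟨s.val, by have hpv : (p : ℕ) = j - i - 1 := rfl; have := s.isLt; omega⟩ \ Sfam p := by
        intro s
        exact (F1 s.val (by have := s.isLt; omega) s.isLt).symm
      have hSR : ∀ s : Fin (k - j - 1),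
          (fun s : Fin (k - j - 1) =>
            Set.Ico (a (j + 1 + (s : ℕ))) (b (j + 1 + (s : ℕ))) ∩
              Set.Ico (b j) (a k)) s
            = Sfam ⟨p.val + 1 + s.val, by have hpv : (p : ℕ) = j - i - 1 := rfl; have := s.isLt; omega⟩ \ Sfam p := by
        intro s
        have hv : (j - i - 1) + 1 + s.val < k - i - 1 := by have := s.isLt; omega
        have e := F2 ((j - i - 1) + 1 + s.val) hv (by omega)
        rw [show i + 1 + ((j - i - 1) + 1 + s.val) = j + 1 + s.val from by omega] at e
        exact e.symm
      constructor
      · intro σ τ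
        obtain ⟨α, hα0, eL, eR, heLmono, heLiff, hσv, heRmono, heRiff, hτv⟩ :=
          build_perm (N := k - i - 1) (L := j - i - 1) (R := k - j - 1)
            (by omega) σ τ p rfl
        refine ⟨α, ?_⟩
        have hdec := cost_decomp Sfam f α p hα0 hLR hRL rfl
          (show k - j - 1 = (k - i - 1) - (j - i - 1) - 1 by omega)
          _ hSL _ hSR eL heLmono heLiff σ hσv eR heRmono heRiff τ hτv
        rw [hSp] at hdec
        exact hdec
      · intro α hα0v
        have hα0 : α 0 = p := Fin.ext hα0v
        obtain ⟨eL, σ, eR, τ, heLmono, heLiff, hσv, heRmono, heRiff, hτv⟩ :=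
          decomp_sides (L := j - i - 1) (R := k - j - 1) α p rfl
            (show k - j - 1 = (k - i - 1) - (j - i - 1) - 1 by omega)
        refine ⟨σ, τ, ?_⟩
        have hdec := cost_decomp Sfam f α p hα0 hLR hRL rfl
          (show k - j - 1 = (k - i - 1) - (j - i - 1) - 1 by omega)
          _ hSL _ hSR eL heLmono heLiff σ hσv eR heRmono heRiff τ hτv
        rw [hSp] at hdec
        exact hdec
    refine le_antisymm ?_ ?_
    · apply Finset.le_inf'
      intro j hj
      rw [Finset.mem_Ioo] at hj
      obtain ⟨hj1, hj2⟩ := hj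
      show C i k ≤ C i j +
        f ((volume (Set.Ico (a j) (b j) ∩ Set.Ico (b i) (a k))).toReal) + C j k
      obtain ⟨σ, hσatt⟩ := perm_ciInf_attained (fun σ : Equiv.Perm (Fin (j - i - 1)) =>
        exposedCost (fun s : Fin (j - i - 1) =>
          Set.Ico (a (i + 1 + (s : ℕ))) (b (i + 1 + (s : ℕ))) ∩
            Set.Ico (b i) (a j)) f σ)
      obtain ⟨τ, hτatt⟩ := perm_ciInf_attained (fun τ : Equiv.Perm (Fin (k - j - 1)) =>
        exposedCost (fun s : Fin (k - j - 1) =>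
          Set.Ico (a (j + 1 + (s : ℕ))) (b (j + 1 + (s : ℕ))) ∩
            Set.Ico (b j) (a k)) f τ)
      obtain ⟨α, hα⟩ := (main j hj1 hj2).1 σ τ
      have hCle : C i k ≤ exposedCost Sfam f α := by
        rw [hCik]; exact perm_ciInf_le _ α
      have e1 : C i j = exposedCost (fun s : Fin (j - i - 1) =>
          Set.Ico (a (i + 1 + (s : ℕ))) (b (i + 1 + (s : ℕ))) ∩
            Set.Ico (b i) (a j)) f σ :=
        (hC i j (by omega) (by omega)).trans hσatt
      have e2 : C j k = exposedCost (fun s : Fin (k - j - 1) =>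
          Set.Ico (a (j + 1 + (s : ℕ))) (b (j + 1 + (s : ℕ))) ∩
            Set.Ico (b j) (a k)) f τ :=
        (hC j k (by omega) (by omega)).trans hτatt
      rw [e1, e2]
      linarith [hα, hCle]
    · obtain ⟨α₀, hα₀att⟩ := perm_ciInf_attained
        (fun α : Equiv.Perm (Fin (k - i - 1)) => exposedCost Sfam f α)
      have hCeq : C i k = exposedCost Sfam f α₀ := hCik.trans hα₀att
      set j := i + 1 + ((α₀ 0 : Fin (k - i - 1)) : ℕ) with hjdef
      have hj1 : i < j := by omega
      have hj2 : j < k := by have := (α₀ 0).isLt; omega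
      obtain ⟨σ, τ, hα⟩ := (main j hj1 hj2).2 α₀ (by omega)
      have hCijle : C i j ≤ exposedCost (fun s : Fin (j - i - 1) =>
          Set.Ico (a (i + 1 + (s : ℕ))) (b (i + 1 + (s : ℕ))) ∩
            Set.Ico (b i) (a j)) f σ := by
        rw [hC i j (by omega) (by omega)]; exact perm_ciInf_le _ σ
      have hCjkle : C j k ≤ exposedCost (fun s : Fin (k - j - 1) =>
          Set.Ico (a (j + 1 + (s : ℕ))) (b (j + 1 + (s : ℕ))) ∩
            Set.Ico (b j) (a k)) f τ := by
        rw [hC j k (by omega) (by omega)]; exact perm_ciInf_le _ τ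
      have hmem : j ∈ Finset.Ioo i k := Finset.mem_Ioo.mpr ⟨hj1, hj2⟩
      have hinf : (Finset.Ioo i k).inf'
          ⟨i + 1, Finset.mem_Ioo.mpr ⟨Nat.lt_succ_self i, by omega⟩⟩
          (fun j => C i j +
            f ((volume (Set.Ico (a j) (b j) ∩ Set.Ico (b i) (a k))).toReal) + C j k)
          ≤ C i j +
            f ((volume (Set.Ico (a j) (b j) ∩ Set.Ico (b i) (a k))).toReal) + C j k :=
        Finset.inf'_le _ hmem
      linarith [hα, hCeq, hinf, hCijle, hCjkle]
end

section
/- Let I_i = [a_i, b_i), i = k, …, n, be half-open intervals with a_k < a_{k+1} < … < a_n, b_k < b_{k+1} < … < b_n, a_i < b_i for all i, and a_{i+1} < b_i for k ≤ i < n (consecutive intervals overlap). Let f : ℝ → ℝ be continuous and convex. Call I_i an E-interval of an ordering α if a_i lies in the exposed part of I_i relative to the intervals preceding I_i in α. Then among all orderings of I_k, …, I_n in which I_k is the only E-interval, the identity ordering (k, k+1, …, n) has minimum cost, and its cost equals f(b_k − a_k) + ∑_{i=k+1}^n f(b_i − b_{i−1}). -/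
/-!
If `I_0` is the only E-interval of `α`, then by induction the first `k + 1` intervals of `α` cover
exactly `[a 0, b (c k))`, where `c k` is the largest index among them. Hence the exposed lengths
are `b 0 - a 0` followed by the increments `b (c (k + 1)) - b (c k)`, each of which is a block of
consecutive gaps `b (i + 1) - b i` (possibly empty). For convex `f` and `x, y ≥ 0` we have
`f x + f y ≤ f (x + y) + f 0`, so merging a block of gaps never decreases the cost; as there are as
many positions as gaps, the `f 0` terms cancel.
-/

open MeasureTheory

open Finset Fin.NatCast

namespace ConvexOn

variable {f : ℝ → ℝ}

theorem add_le_map_add_add_map_zero (hf : ConvexOn ℝ Set.univ f) {x y : ℝ} (hx : 0 ≤ x)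
    (hy : 0 ≤ y) : f x + f y ≤ f (x + y) + f 0 := by
  rcases (add_nonneg hx hy).eq_or_lt with hs | hs
  · obtain rfl : x = 0 := by linarith
    obtain rfl : y = 0 := by linarith
    simp
  -- `u = (u / s) • s + (v / s) • 0` whenever `u + v = s := x + y`
  have key : ∀ {u v : ℝ}, 0 ≤ u → 0 ≤ v → u + v = x + y →
      f u ≤ u / (x + y) * f (x + y) + v / (x + y) * f 0 := by
    intro u v hu hv huv
    have h := hf.2 (Set.mem_univ (x + y)) (Set.mem_univ 0) (div_nonneg hu hs.le)
      (div_nonneg hv hs.le) (by rw [← add_div, huv, div_self hs.ne'])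
    rwa [smul_eq_mul, smul_zero, add_zero, div_mul_cancel₀ _ hs.ne'] at h
  have hsum : x / (x + y) + y / (x + y) = 1 := by rw [← add_div, div_self hs.ne']
  linear_combination key hx hy rfl + key hy hx (add_comm y x) + (f (x + y) + f 0) * hsum

theorem sum_Ico_map_sub_le (hf : ConvexOn ℝ Set.univ f) {g : ℕ → ℝ} {p q : ℕ} (hpq : p ≤ q)
    (hg : MonotoneOn g (Set.Icc p q)) :
    ∑ i ∈ Ico p q, f (g (i + 1) - g i) ≤ f (g q - g p) + ((q : ℝ) - p - 1) * f 0 := by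
  induction q, hpq using Nat.le_induction with
  | base => simp
  | succ q hpq ih =>
    have hgq : g q ≤ g (q + 1) := hg ⟨by omega, by omega⟩ ⟨by omega, le_rfl⟩ (by omega)
    have hgp : g p ≤ g q := hg ⟨le_rfl, by omega⟩ ⟨hpq, by omega⟩ hpq
    have ih := ih (hg.mono (Set.Icc_subset_Icc_right (by omega)))
    have hmerge := hf.add_le_map_add_add_map_zero (sub_nonneg.2 hgp) (sub_nonneg.2 hgq)
    rw [sub_add_sub_cancel'] at hmerge
    rw [sum_Ico_succ_top hpq]
    push_cast
    linarith

theorem sum_range_map_sub_le_sum_range_map_sub_comp (hf : ConvexOn ℝ Set.univ f) {g : ℕ → ℝ}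
    {n : ℕ} (hg : MonotoneOn g (Set.Iic n)) {c : ℕ → ℕ} (hc : Monotone c) (hc0 : c 0 = 0)
    (hcn : c n = n) :
    ∑ k ∈ range n, f (g (k + 1) - g k) ≤ ∑ k ∈ range n, f (g (c (k + 1)) - g (c k)) := by
  suffices h : ∀ k ≤ n, ∑ i ∈ range (c k), f (g (i + 1) - g i) ≤
      ∑ j ∈ range k, f (g (c (j + 1)) - g (c j)) + ((c k : ℝ) - k) * f 0 by
    simpa [hcn] using h n le_rfl
  intro k hk
  induction k with
  | zero => simp [hc0]
  | succ k ih =>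
    have hck : c k ≤ c (k + 1) := hc k.le_succ
    have hblock := hf.sum_Ico_map_sub_le hck
      (hg.mono fun i hi => hi.2.trans (hcn ▸ hc hk))
    rw [← sum_range_add_sum_Ico _ hck, sum_range_succ]
    push_cast
    linarith [ih (by omega)]

end ConvexOn

theorem MonotoneOn.partialSups_comp {α β : Type*} [LinearOrder α] [LinearOrder β] {g : α → β}
    {a : α} (hg : MonotoneOn g (Set.Iic a)) {σ : ℕ → α} (hσ : ∀ j, σ j ≤ a) (k : ℕ) :
    partialSups (fun j => g (σ j)) k = g (partialSups σ k) := by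
  induction k with
  | zero => simp
  | succ k ih =>
    rw [partialSups_add_one, partialSups_add_one, ih,
      hg.map_max (partialSups_le _ _ _ fun j _ => hσ j) (hσ _)]

theorem Fin.biUnion_lt_eq_biUnion_natCast_lt {X : Type*} {n : ℕ} [NeZero n] (G : Fin n → Set X)
    (k : Fin n) : ⋃ (j : Fin n) (_ : j < k), G j = ⋃ (p : ℕ) (_ : p < k), G (p : Fin n) := by
  ext z
  simp only [Set.mem_iUnion, exists_prop]
  constructor
  · rintro ⟨j, hj, hz⟩
    exact ⟨j, hj, by rwa [Fin.cast_val_eq_self]⟩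
  · rintro ⟨p, hp, hz⟩
    exact ⟨p, by rwa [Fin.lt_def, Fin.val_cast_of_lt (hp.trans k.2)], hz⟩

section Frontier

variable {x y : ℕ → ℝ} {n : ℕ}

theorem biUnion_Ico_eq_Ico_partialSups (hxy : ∀ j, x j ≤ y j)
    (hcov : ∀ k < n, x (k + 1) ∈ ⋃ j ≤ k, Set.Ico (x j) (y j)) {k : ℕ} (hk : k ≤ n) :
    ⋃ j ≤ k, Set.Ico (x j) (y j) = Set.Ico (x 0) (partialSups y k) := by
  induction k with
  | zero => simp
  | succ k ih =>
    have ih := ih (by omega)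
    have hx := hcov k (by omega)
    rw [ih, Set.mem_Ico] at hx
    rw [Set.biUnion_le_succ, ih, Set.Ico_union_Ico' hx.2.le (hx.1.trans (hxy _)),
      min_eq_left hx.1, partialSups_add_one]

theorem volume_Ico_diff_biUnion_Ico (hxy : ∀ j, x j ≤ y j)
    (hcov : ∀ k < n, x (k + 1) ∈ ⋃ j ≤ k, Set.Ico (x j) (y j)) {k : ℕ} (hk : k < n) :
    (volume (Set.Ico (x (k + 1)) (y (k + 1)) \ ⋃ j ≤ k, Set.Ico (x j) (y j))).toReal =
      partialSups y (k + 1) - partialSups y k := by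
  have hx := hcov k hk
  rw [biUnion_Ico_eq_Ico_partialSups hxy hcov hk.le, Set.mem_Ico] at hx
  rw [biUnion_Ico_eq_Ico_partialSups hxy hcov hk.le]
  have hdiff : Set.Ico (x (k + 1)) (y (k + 1)) \ Set.Ico (x 0) (partialSups y k) =
      Set.Ico (partialSups y k) (y (k + 1)) := by
    ext z
    simp only [Set.mem_sdiff, Set.mem_Ico, not_and, not_lt]
    constructor
    · rintro ⟨⟨h1, h2⟩, h3⟩
      exact ⟨h3 (hx.1.trans h1), h2⟩
    · rintro ⟨h1, h2⟩
      exact ⟨⟨hx.2.le.trans h1, h2⟩, fun _ => h1⟩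
  rw [hdiff, Real.volume_Ico, ENNReal.toReal_ofReal', partialSups_add_one, ← max_sub_sub_right,
    sub_self, max_comm]

end Frontier

theorem exposedCost_Ico_eq_of_covered {a b : ℕ → ℝ} {n : ℕ} (hab : ∀ i : Fin (n + 1), a i ≤ b i)
    (f : ℝ → ℝ) (α : Equiv.Perm (Fin (n + 1)))
    (hcov : ∀ k < n, a (α (k + 1 : ℕ)) ∈ ⋃ j ≤ k, Set.Ico (a (α j)) (b (α j))) :
    exposedCost (fun i : Fin (n + 1) => Set.Ico (a i) (b i)) f α =
      f (b (α 0) - a (α 0)) + ∑ k ∈ range n,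
        f (partialSups (fun j : ℕ => b (α j)) (k + 1) - partialSups (fun j : ℕ => b (α j)) k) := by
  set x : ℕ → ℝ := fun j => a (α j)
  set y : ℕ → ℝ := fun j => b (α j)
  have hxy : ∀ j, x j ≤ y j := fun j => hab _
  set E : ℕ → ℝ := fun p => (volume (Set.Ico (x p) (y p) \ ⋃ j < p, Set.Ico (x j) (y j))).toReal
  have hE : ∀ k < n, E (k + 1) = partialSups y (k + 1) - partialSups y k := fun k hk => by
    simp only [E, Nat.lt_succ_iff]
    exact volume_Ico_diff_biUnion_Ico hxy hcov hk
  have hE0 : E 0 = y 0 - x 0 := by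
    simp [E, Real.volume_Ico, sub_nonneg.2 (hxy 0)]
  calc exposedCost (fun i : Fin (n + 1) => Set.Ico (a i) (b i)) f α
      = ∑ k : Fin (n + 1), f (E k) := by
        refine sum_congr rfl fun k _ => ?_
        simp only [E, x, y, Fin.cast_val_eq_self]
        rw [Fin.biUnion_lt_eq_biUnion_natCast_lt fun j => Set.Ico (a (α j)) (b (α j))]
    _ = f (E 0) + ∑ k ∈ range n, f (E (k + 1)) := by
        rw [Fin.sum_univ_eq_sum_range (fun p => f (E p)), sum_range_succ', add_comm]
    _ = _ := by
        rw [hE0, sum_congr rfl fun k hk => congrArg f (hE k (mem_range.1 hk))]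
        simp [x, y]

section Ordering

variable {a b : ℕ → ℝ} {n : ℕ}

-- `I_0` is the only E-interval of `α`
def OnlyFirstExposed (a b : ℕ → ℝ) (α : Equiv.Perm (Fin (n + 1))) : Prop :=
  ∀ i : Fin (n + 1),
    a i ∉ ⋃ (j : Fin (n + 1)) (_ : α.symm j < α.symm i), Set.Ico (a j) (b j) → i = 0

theorem left_mem_biUnion_Ico_of_overlap (hA : ∀ i, i + 1 < n + 1 → a i < a (i + 1))
    (hov : ∀ i, i + 1 < n + 1 → a (i + 1) < b i) {i : Fin (n + 1)} (hi : i ≠ 0) :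
    a i ∈ ⋃ (j : Fin (n + 1)) (_ : j < i), Set.Ico (a j) (b j) := by
  obtain ⟨p, hp⟩ : ∃ p, (i : ℕ) = p + 1 :=
    Nat.exists_eq_add_one.2 (Nat.pos_of_ne_zero (Fin.val_ne_zero_iff.2 hi))
  have hpi := i.2
  refine Set.mem_biUnion (x := ⟨p, by omega⟩) (Fin.lt_def.2 (by simp [hp])) ?_
  rw [hp]
  exact ⟨(hA p (by omega)).le, hov p (by omega)⟩

namespace OnlyFirstExposed

variable {α : Equiv.Perm (Fin (n + 1))}

theorem apply_zero (hα : OnlyFirstExposed a b α) : α 0 = 0 :=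
  hα _ (by simp)

theorem mem_biUnion (hα : OnlyFirstExposed a b α) {k : ℕ} (hk : k < n) :
    a (α (k + 1 : ℕ)) ∈ ⋃ j ≤ k, Set.Ico (a (α j)) (b (α j)) := by
  have hval : ((k + 1 : ℕ) : Fin (n + 1)).val = k + 1 := Fin.val_cast_of_lt (by omega)
  by_contra h
  have h0 : α (k + 1 : ℕ) = α 0 := (hα _ ?_).trans hα.apply_zero.symm
  · have := congrArg Fin.val (α.injective h0)
    rw [hval, Fin.val_zero] at this
    omega
  rw [← α.surjective.iUnion_comp]
  simp only [Equiv.symm_apply_apply]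
  rw [Fin.biUnion_lt_eq_biUnion_natCast_lt fun j => Set.Ico (a (α j)) (b (α j)), hval]
  simpa only [Nat.lt_succ_iff] using h

theorem partialSups_zero (hα : OnlyFirstExposed a b α) :
    partialSups (fun j : ℕ => (α j : ℕ)) 0 = 0 := by
  simp [hα.apply_zero]

theorem exposedCost_eq (hα : OnlyFirstExposed a b α) (hab : ∀ i : Fin (n + 1), a i ≤ b i)
    (hb : MonotoneOn b (Set.Iic n)) (f : ℝ → ℝ) :
    exposedCost (fun i : Fin (n + 1) => Set.Ico (a i) (b i)) f α =
      f (b 0 - a 0) + ∑ k ∈ range n, f (b (partialSups (fun j : ℕ => (α j : ℕ)) (k + 1)) -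
        b (partialSups (fun j : ℕ => (α j : ℕ)) k)) := by
  have hσ : ∀ j : ℕ, (α j : ℕ) ≤ n := fun j => Fin.is_le _
  simp only [exposedCost_Ico_eq_of_covered hab f α fun k hk => hα.mem_biUnion hk, hα.apply_zero,
    Fin.val_zero, ← hb.partialSups_comp hσ]

end OnlyFirstExposed

theorem Equiv.Perm.partialSups_val_apply_self (α : Equiv.Perm (Fin (n + 1))) :
    partialSups (fun j : ℕ => (α j : ℕ)) n = n := by
  refine le_antisymm (partialSups_le _ _ _ fun j _ => Fin.is_le _) ?_
  have h := le_partialSups_of_le (fun j : ℕ => (α j : ℕ)) (α.symm (Fin.last n)).is_le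
  simpa only [Fin.cast_val_eq_self, Equiv.apply_symm_apply, Fin.val_last] using h

theorem partialSups_val_natCast {k : ℕ} (hk : k ≤ n) :
    partialSups (fun j : ℕ => ((j : Fin (n + 1)) : ℕ)) k = k := by
  refine le_antisymm (partialSups_le _ _ _ fun j hj => ?_) ?_
  · exact (Fin.val_natCast j (n + 1) ▸ Nat.mod_le j (n + 1)).trans hj
  · simpa only [Fin.val_cast_of_lt (Nat.lt_succ_of_le hk)] using
      le_partialSups (fun j : ℕ => ((j : Fin (n + 1)) : ℕ)) k

end Ordering

theorem stmt_4_general (m : ℕ) (hm : 0 < m) (a b : ℕ → ℝ)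
    (hA : ∀ i, i + 1 < m → a i < a (i + 1))
    (hB : ∀ i, i + 1 < m → b i < b (i + 1))
    (hab : ∀ i, i < m → a i < b i)
    (hov : ∀ i, i + 1 < m → a (i + 1) < b i)
    (f : ℝ → ℝ) (hconv : ConvexOn ℝ Set.univ f) :
    -- the identity ordering has `I_0` as its only E-interval
    (∀ i : Fin m,
      a (i : ℕ) ∉ (⋃ (j : Fin m) (_ : j < i), Set.Ico (a (j : ℕ)) (b (j : ℕ))) →
      i = ⟨0, hm⟩) ∧
    -- the cost of the identity ordering
    exposedCost (fun i : Fin m => Set.Ico (a (i : ℕ)) (b (i : ℕ))) f 1 =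
      f (b 0 - a 0) + ∑ i ∈ Finset.Ico 1 m, f (b i - b (i - 1)) ∧
    -- the identity ordering minimizes the cost among all orderings whose
    -- only E-interval is the first interval
    ∀ α : Equiv.Perm (Fin m),
      (∀ i : Fin m,
        a (i : ℕ) ∉ (⋃ (j : Fin m) (_ : α.symm j < α.symm i),
          Set.Ico (a (j : ℕ)) (b (j : ℕ))) → i = ⟨0, hm⟩) →
      exposedCost (fun i : Fin m => Set.Ico (a (i : ℕ)) (b (i : ℕ))) f 1 ≤
      exposedCost (fun i : Fin m => Set.Ico (a (i : ℕ)) (b (i : ℕ))) f α := by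
  obtain ⟨n, rfl⟩ : ∃ n, m = n + 1 := ⟨m - 1, by omega⟩
  have hab' : ∀ i : Fin (n + 1), a i ≤ b i := fun i => (hab i i.2).le
  have hb : MonotoneOn b (Set.Iic n) := monotoneOn_of_le_succ Set.ordConnected_Iic
    fun i _ _ hi => (hB i (Nat.lt_succ_of_le hi)).le
  have hid : ∀ i : Fin (n + 1), a i ∉ ⋃ (j : Fin (n + 1)) (_ : j < i), Set.Ico (a j) (b j) →
      i = 0 := fun i hi => by_contra fun h0 => hi (left_mem_biUnion_Ico_of_overlap hA hov h0)
  have hcost1 : exposedCost (fun i : Fin (n + 1) => Set.Ico (a i) (b i)) f 1 =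
      f (b 0 - a 0) + ∑ k ∈ range n, f (b (k + 1) - b k) := by
    have h1 : OnlyFirstExposed a b (1 : Equiv.Perm (Fin (n + 1))) := hid
    rw [h1.exposedCost_eq hab' hb]
    refine congrArg _ (sum_congr rfl fun k hk => ?_)
    have hk := mem_range.1 hk
    simp only [Equiv.Perm.one_apply, partialSups_val_natCast hk.le, partialSups_val_natCast hk]
  refine ⟨hid, hcost1.trans ?_, fun α (hα : OnlyFirstExposed a b α) => ?_⟩
  · rw [sum_Ico_eq_sum_range]
    simp [add_comm]
  rw [hcost1, hα.exposedCost_eq hab' hb]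
  gcongr f (b 0 - a 0) + ?_
  exact hconv.sum_range_map_sub_le_sum_range_map_sub_comp hb (partialSups _).monotone
    hα.partialSups_zero α.partialSups_val_apply_self

/-- For agreeable, pairwise-overlapping intervals `I_0, …, I_{m-1}` and a continuous
convex cost `f`, the identity ordering is the unique-type minimizer among all orderings
in which the first interval is the only E-interval (an interval `I_i` is an E-interval
of `α` when its left endpoint `a i` lies in its exposed part), and the identity ordering
has cost `f (b 0 - a 0) + ∑_{i=1}^{m-1} f (b i - b (i-1))`. -/
theorem stmt_4 (m : ℕ) (hm : 0 < m) (a b : ℕ → ℝ)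
    (hA : ∀ i, i + 1 < m → a i < a (i + 1))
    (hB : ∀ i, i + 1 < m → b i < b (i + 1))
    (hab : ∀ i, i < m → a i < b i)
    (hov : ∀ i, i + 1 < m → a (i + 1) < b i)
    (f : ℝ → ℝ) (hconv : ConvexOn ℝ Set.univ f) (hcont : Continuous f) :
    -- the identity ordering has `I_0` as its only E-interval
    (∀ i : Fin m,
      a (i : ℕ) ∉ (⋃ (j : Fin m) (_ : j < i), Set.Ico (a (j : ℕ)) (b (j : ℕ))) →
      i = ⟨0, hm⟩) ∧
    -- the cost of the identity ordering
    exposedCost (fun i : Fin m => Set.Ico (a (i : ℕ)) (b (i : ℕ))) f 1 =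
      f (b 0 - a 0) + ∑ i ∈ Finset.Ico 1 m, f (b i - b (i - 1)) ∧
    -- the identity ordering minimizes the cost among all orderings whose
    -- only E-interval is the first interval
    ∀ α : Equiv.Perm (Fin m),
      (∀ i : Fin m,
        a (i : ℕ) ∉ (⋃ (j : Fin m) (_ : α.symm j < α.symm i),
          Set.Ico (a (j : ℕ)) (b (j : ℕ))) → i = ⟨0, hm⟩) →
      exposedCost (fun i : Fin m => Set.Ico (a (i : ℕ)) (b (i : ℕ))) f 1 ≤
      exposedCost (fun i : Fin m => Set.Ico (a (i : ℕ)) (b (i : ℕ))) f α :=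
  stmt_4_general m hm a b hA hB hab hov f hconv
end

section
/- Let I_1, …, I_n be half-open intervals I_i = [a_i, b_i) with a_i ≤ b_i, and let f : ℝ → ℝ be such that g(x) = f(x) − f(0) is super-additive on the nonnegative reals, i.e., g(x+y) ≥ g(x) + g(y) for all x, y ≥ 0. Let α be an ordering and suppose that for some indices i, j with I_i ⊊ I_j, the interval I_j occupies the position immediately before I_i in α. Then the ordering α' obtained from α by swapping I_i and I_j satisfies cost(α') ≤ cost(α). -/
open MeasureTheory

/-- Exchange lemma: if `g x = f x - f 0` is super-additive on the nonnegative reals,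
`I_i ⊊ I_j`, and `I_j` occupies the position immediately before `I_i` in the ordering
`α`, then swapping `I_i` and `I_j` does not increase the cost. -/
theorem stmt_6 (n : ℕ) (a b : Fin n → ℝ) (hab : ∀ i, a i ≤ b i)
    (f : ℝ → ℝ)
    (hsuper : ∀ x y : ℝ, 0 ≤ x → 0 ≤ y →
      (f x - f 0) + (f y - f 0) ≤ f (x + y) - f 0)
    (i j : Fin n) (hij : Set.Ico (a i) (b i) ⊂ Set.Ico (a j) (b j))
    (α : Equiv.Perm (Fin n)) (k : Fin n) (hk : (k : ℕ) + 1 < n)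
    (hαk : α k = j) (hαk1 : α ⟨(k : ℕ) + 1, hk⟩ = i) :
    exposedCost (fun l => Set.Ico (a l) (b l)) f (α * Equiv.swap k ⟨(k : ℕ) + 1, hk⟩) ≤
    exposedCost (fun l => Set.Ico (a l) (b l)) f α := by
  set S : Fin n → Set ℝ := fun l => Set.Ico (a l) (b l) with hSdef
  set k1 : Fin n := ⟨(k : ℕ) + 1, hk⟩ with hk1def
  have hkk1 : k < k1 := by
    rw [Fin.lt_def]; simp [hk1def]
  have hne : k ≠ k1 := ne_of_lt hkk1
  set σ : Equiv.Perm (Fin n) := Equiv.swap k k1 with hσdef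
  set U : Set ℝ := ⋃ (m : Fin n) (_ : m < k), S (α m) with hUdef
  have hU : MeasurableSet U :=
    MeasurableSet.iUnion fun m => MeasurableSet.iUnion fun _ => measurableSet_Ico
  have hSmeas : ∀ l, MeasurableSet (S l) := fun l => measurableSet_Ico
  have hSfin : ∀ l, volume (S l) ≠ ⊤ := by
    intro l
    simp only [hSdef, Real.volume_Ico]
    exact ENNReal.ofReal_ne_top
  have hSi_sub : S i ⊆ S j := hij.subset
  -- swap fixes everything below k
  have hσfix : ∀ m : Fin n, m < k → σ m = m := by
    intro m hm
    exact Equiv.swap_apply_of_ne_of_ne (ne_of_lt hm) (ne_of_lt (lt_trans hm hkk1))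
  -- values of α * σ at k and k1
  have hv1 : (α * σ) k = i := by
    rw [Equiv.Perm.mul_apply, hσdef, Equiv.swap_apply_left, hαk1]
  have hv2 : (α * σ) k1 = j := by
    rw [Equiv.Perm.mul_apply, hσdef, Equiv.swap_apply_right, hαk]
  -- unions at various positions
  have hUk : (⋃ (m : Fin n) (_ : m < k), S ((α * σ) m)) = U := by
    rw [hUdef]
    refine Set.iUnion_congr fun m => ?_
    by_cases hm : m < k
    · rw [Equiv.Perm.mul_apply, hσfix m hm]
    · simp [hm]
  have hsplitlt : ∀ m : Fin n, m < k1 ↔ m < k ∨ m = k := by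
    intro m
    rw [Fin.lt_def, Fin.lt_def, Fin.ext_iff]
    simp only [hk1def]
    omega
  have hUk1 : (⋃ (m : Fin n) (_ : m < k1), S (α m)) = U ∪ S j := by
    ext x
    simp only [hUdef, Set.mem_iUnion, Set.mem_union]
    constructor
    · rintro ⟨m, hm, hx⟩
      rcases (hsplitlt m).mp hm with h | rfl
      · exact Or.inl ⟨m, h, hx⟩
      · rw [hαk] at hx; exact Or.inr hx
    · rintro (⟨m, hm, hx⟩ | hx)
      · exact ⟨m, (hsplitlt m).mpr (Or.inl hm), hx⟩
      · exact ⟨k, (hsplitlt k).mpr (Or.inr rfl), by rwa [hαk]⟩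
  have hUk1' : (⋃ (m : Fin n) (_ : m < k1), S ((α * σ) m)) = U ∪ S i := by
    ext x
    simp only [hUdef, Set.mem_iUnion, Set.mem_union]
    constructor
    · rintro ⟨m, hm, hx⟩
      rcases (hsplitlt m).mp hm with h | rfl
      · rw [Equiv.Perm.mul_apply, hσfix m h] at hx
        exact Or.inl ⟨m, h, hx⟩
      · rw [hv1] at hx; exact Or.inr hx
    · rintro (⟨m, hm, hx⟩ | hx)
      · exact ⟨m, (hsplitlt m).mpr (Or.inl hm),
          by rwa [Equiv.Perm.mul_apply, hσfix m hm]⟩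
      · exact ⟨k, (hsplitlt k).mpr (Or.inr rfl), by rwa [hv1]⟩
  -- union equality away from k, k1
  have hUnion : ∀ l : Fin n, l ≠ k → l ≠ k1 →
      (⋃ (m : Fin n) (_ : m < l), S ((α * σ) m)) = ⋃ (m : Fin n) (_ : m < l), S (α m) := by
    intro l hlk hlk1
    have hcase : l < k ∨ k1 < l := by
      rw [Fin.lt_def, Fin.lt_def]
      have h1 : (l : ℕ) ≠ (k : ℕ) := fun h => hlk (Fin.ext h)
      have h2 : (l : ℕ) ≠ (k1 : ℕ) := fun h => hlk1 (Fin.ext h)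
      simp only [hk1def] at h2 ⊢
      omega
    have key : ∀ m : Fin n, m < l → σ m < l := by
      intro m hm
      rcases eq_or_ne m k with rfl | hmk
      · rw [hσdef, Equiv.swap_apply_left]
        rcases hcase with h | h
        · exact absurd hm (not_lt.mpr h.le)
        · exact h
      rcases eq_or_ne m k1 with rfl | hmk1
      · rw [hσdef, Equiv.swap_apply_right]
        exact lt_trans hkk1 hm
      · rw [hσdef, Equiv.swap_apply_of_ne_of_ne hmk hmk1]
        exact hm
    ext x
    simp only [Set.mem_iUnion, Equiv.Perm.mul_apply]
    constructor
    · rintro ⟨m, hm, hx⟩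
      exact ⟨σ m, key m hm, hx⟩
    · rintro ⟨m, hm, hx⟩
      refine ⟨σ m, key m hm, ?_⟩
      rw [hσdef, Equiv.swap_apply_self]
      exact hx
  -- measure facts
  have hempty : S i \ (U ∪ S j) = ∅ :=
    Set.diff_eq_empty.mpr (hSi_sub.trans Set.subset_union_right)
  have hdecomp : S j \ U = (S i \ U) ∪ (S j \ (U ∪ S i)) := by
    ext x
    simp only [Set.mem_diff, Set.mem_union]
    constructor
    · rintro ⟨hxj, hxU⟩
      by_cases hxi : x ∈ S i
      · exact Or.inl ⟨hxi, hxU⟩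
      · exact Or.inr ⟨hxj, fun h => h.elim hxU hxi⟩
    · rintro (⟨hxi, hxU⟩ | ⟨hxj, hxUi⟩)
      · exact ⟨hSi_sub hxi, hxU⟩
      · exact ⟨hxj, fun h => hxUi (Or.inl h)⟩
  have hdisj : Disjoint (S i \ U) (S j \ (U ∪ S i)) := by
    rw [Set.disjoint_left]
    rintro x ⟨hxi, -⟩ ⟨-, hxUi⟩
    exact hxUi (Or.inr hxi)
  have hmeas2 : MeasurableSet (S j \ (U ∪ S i)) :=
    (hSmeas j).diff (hU.union (hSmeas i))
  have hadd : volume (S j \ U) = volume (S i \ U) + volume (S j \ (U ∪ S i)) := by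
    rw [hdecomp, measure_union hdisj hmeas2]
  have hfini : volume (S i \ U) ≠ ⊤ :=
    fun h => hSfin i (top_le_iff.mp (h ▸ measure_mono Set.diff_subset))
  have hfinji : volume (S j \ (U ∪ S i)) ≠ ⊤ :=
    fun h => hSfin j (top_le_iff.mp (h ▸ measure_mono Set.diff_subset))
  set x : ℝ := (volume (S i \ U)).toReal with hxdef
  set y : ℝ := (volume (S j \ (U ∪ S i))).toReal with hydef
  have hxy : (volume (S j \ U)).toReal = x + y := by
    rw [hadd, ENNReal.toReal_add hfini hfinji]
  -- the sum split
  have hk1mem : k1 ∈ Finset.univ.erase k :=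
    Finset.mem_erase.mpr ⟨Ne.symm hne, Finset.mem_univ k1⟩
  have hsplit : ∀ g : Fin n → ℝ,
      ∑ l, g l = (∑ l ∈ (Finset.univ.erase k).erase k1, g l) + g k1 + g k := by
    intro g
    rw [← Finset.sum_erase_add Finset.univ g (Finset.mem_univ k),
      ← Finset.sum_erase_add _ g hk1mem]
  simp only [exposedCost]
  rw [hsplit, hsplit]
  have hsame : (∑ l ∈ (Finset.univ.erase k).erase k1,
      f ((volume (S ((α * σ) l) \ ⋃ (m : Fin n) (_ : m < l), S ((α * σ) m))).toReal)) =
      ∑ l ∈ (Finset.univ.erase k).erase k1,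
      f ((volume (S (α l) \ ⋃ (m : Fin n) (_ : m < l), S (α m))).toReal) := by
    refine Finset.sum_congr rfl fun l hl => ?_
    have hlk1 : l ≠ k1 := (Finset.mem_erase.mp hl).1
    have hlk : l ≠ k := (Finset.mem_erase.mp (Finset.mem_erase.mp hl).2).1
    have hvl : (α * σ) l = α l := by
      rw [Equiv.Perm.mul_apply, hσdef, Equiv.swap_apply_of_ne_of_ne hlk hlk1]
    rw [hvl, hUnion l hlk hlk1]
  rw [hsame]
  have hterm : f ((volume (S ((α * σ) k1) \ ⋃ (m : Fin n) (_ : m < k1), S ((α * σ) m))).toReal)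
      + f ((volume (S ((α * σ) k) \ ⋃ (m : Fin n) (_ : m < k), S ((α * σ) m))).toReal)
      ≤ f ((volume (S (α k1) \ ⋃ (m : Fin n) (_ : m < k1), S (α m))).toReal)
      + f ((volume (S (α k) \ ⋃ (m : Fin n) (_ : m < k), S (α m))).toReal) := by
    rw [hv1, hv2, hUk, hUk1, hUk1', hαk, hαk1]
    rw [hempty]
    simp only [measure_empty, ENNReal.toReal_zero]
    rw [hxy]
    have hx0 : 0 ≤ x := ENNReal.toReal_nonneg
    have hy0 : 0 ≤ y := ENNReal.toReal_nonneg
    have := hsuper x y hx0 hy0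
    linarith
  linarith
end

section
/- Let I_1, …, I_n be half-open intervals I_i = [a_i, b_i) with a_i ≤ b_i forming a laminar family (for any two of the intervals, either they are disjoint or one is contained in the other), and let f : ℝ → ℝ be such that g(x) = f(x) − f(0) is super-additive on the nonnegative reals, i.e., g(x+y) ≥ g(x) + g(y) for all x, y ≥ 0. Then every ordering α that respects the inclusions — i.e., whenever I_i ⊊ I_j, the index i appears before j in α — has minimum cost among all orderings. -/
open MeasureTheory

open Finset

namespace LaminarOrdering

variable {X : Type*} {n : ℕ}

def IsLaminar {ι : Type*} (S : ι → Set X) : Prop :=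
  ∀ i j, S i ∩ S j = ∅ ∨ S i ⊆ S j ∨ S j ⊆ S i

def RespectsInclusions (S : Fin n → Set X) (α : Equiv.Perm (Fin n)) : Prop :=
  ∀ i j, S i ⊂ S j → α.symm i < α.symm j

def exposed (S : Fin n → Set X) (α : Equiv.Perm (Fin n)) (k : Fin n) : Set X :=
  S (α k) \ ⋃ (j : Fin n) (_ : j < k), S (α j)

lemma IsLaminar.subset_or_subset {ι : Type*} {S : ι → Set X} (hS : IsLaminar S) {i j : ι}
    {x : X} (hi : x ∈ S i) (hj : x ∈ S j) : S i ⊆ S j ∨ S j ⊆ S i :=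
  (hS i j).resolve_left (Set.nonempty_iff_ne_empty.mp ⟨x, hi, hj⟩)

section Exposed

variable {S : Fin n → Set X} {α : Equiv.Perm (Fin n)} {j k : Fin n} {x : X}

lemma mem_exposed : x ∈ exposed S α k ↔ x ∈ S (α k) ∧ ∀ j < k, x ∉ S (α j) := by
  simp [exposed]

lemma exposed_subset : exposed S α k ⊆ S (α k) := Set.sdiff_subset

lemma disjoint_exposed_of_lt (h : j < k) : Disjoint (exposed S α j) (exposed S α k) :=
  Set.disjoint_left.mpr fun _ hj hk => (mem_exposed.mp hk).2 j h (exposed_subset hj)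

lemma pairwise_disjoint_exposed (S : Fin n → Set X) (α : Equiv.Perm (Fin n)) :
    Pairwise (Function.onFun Disjoint (exposed S α)) := fun _ _ hjk =>
  hjk.lt_or_gt.elim disjoint_exposed_of_lt fun h => (disjoint_exposed_of_lt h).symm

lemma exists_mem_exposed {i : Fin n} (hx : x ∈ S i) : ∃ k, x ∈ exposed S α k := by
  obtain ⟨k, hk, hmin⟩ :=
    wellFounded_lt.has_min {k | x ∈ S (α k)} ⟨α.symm i, by simpa using hx⟩
  exact ⟨k, mem_exposed.mpr ⟨hk, fun j hj hxj => hmin j hxj hj⟩⟩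

lemma RespectsInclusions.subset_of_mem_exposed (hS : IsLaminar S)
    (hα : RespectsInclusions S α) (hx : x ∈ exposed S α k) {i : Fin n} (hi : x ∈ S i) :
    S (α k) ⊆ S i := by
  obtain ⟨hxk, hnot⟩ := mem_exposed.mp hx
  rcases hS.subset_or_subset hxk hi with hki | hik
  · exact hki
  obtain heq | hlt := hik.eq_or_ssubset
  · exact heq.symm.subset
  · have hpos : α.symm i < k := by simpa using hα i (α k) hlt
    exact absurd (by simpa using hi) (hnot _ hpos)

end Exposed

noncomputable def firstCover (S : Fin n → Set X) (β : Equiv.Perm (Fin n)) (l : Fin n) :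
    Fin n :=
  wellFounded_lt.min {m | S l ⊆ S (β m)} ⟨β.symm l, by simp⟩

lemma subset_firstCover (S : Fin n → Set X) (β : Equiv.Perm (Fin n)) (l : Fin n) :
    S l ⊆ S (β (firstCover S β l)) :=
  wellFounded_lt.min_mem {m | S l ⊆ S (β m)} _

lemma firstCover_le {S : Fin n → Set X} {β : Equiv.Perm (Fin n)} {l m : Fin n}
    (h : S l ⊆ S (β m)) : firstCover S β l ≤ m :=
  not_lt.mp (wellFounded_lt.not_lt_min {m | S l ⊆ S (β m)} h)

lemma exposed_eq_biUnion_exposed {S : Fin n → Set X} {α : Equiv.Perm (Fin n)}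
    (hS : IsLaminar S) (hα : RespectsInclusions S α) (β : Equiv.Perm (Fin n)) (m : Fin n) :
    exposed S β m =
      ⋃ k ∈ univ.filter fun k => firstCover S β (α k) = m, exposed S α k := by
  ext x
  simp only [mem_filter, mem_univ, true_and, Set.mem_iUnion, exists_prop]
  constructor
  · intro hx
    obtain ⟨k, hk⟩ := exists_mem_exposed (α := α) (exposed_subset hx)
    have hle := firstCover_le (hα.subset_of_mem_exposed hS hk (exposed_subset hx))
    refine ⟨k, hle.antisymm (not_lt.mp fun hlt => ?_), hk⟩
    exact (mem_exposed.mp hx).2 _ hlt (subset_firstCover S β _ (exposed_subset hk))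
  · rintro ⟨k, rfl, hk⟩
    refine mem_exposed.mpr ⟨subset_firstCover S β _ (exposed_subset hk), fun j hj hxj => ?_⟩
    exact hj.not_ge (firstCover_le (hα.subset_of_mem_exposed hS hk hxj))

lemma sum_le_sum_fiberwise_of_superadditive {ι : Type*} [Fintype ι] [DecidableEq ι]
    (f : ℝ → ℝ)
    (hsuper : ∀ x y : ℝ, 0 ≤ x → 0 ≤ y → (f x - f 0) + (f y - f 0) ≤ f (x + y) - f 0)
    (φ : ι → ι) (v : ι → ℝ) (hv : ∀ i, 0 ≤ v i) :
    ∑ i, f (v i) ≤ ∑ m, f (∑ i with φ i = m, v i) := by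
  have hsum : ∀ s : Finset ι, ∑ i ∈ s, (f (v i) - f 0) ≤ f (∑ i ∈ s, v i) - f 0 := by
    intro s
    have := le_sum_of_subadditive_on_pred (fun x => f 0 - f x) (0 ≤ ·) (by simp)
      (fun x y hx hy => by linarith [hsuper x y hx hy]) (fun _ _ => add_nonneg) v
      (s := s) fun i _ => hv i
    simp only [sum_sub_distrib, sum_const, nsmul_eq_mul] at this ⊢
    linarith
  calc ∑ i, f (v i) = ∑ m, (∑ i with φ i = m, (f (v i) - f 0) + f 0) := by
        rw [sum_add_distrib, sum_fiberwise, ← sum_add_distrib]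
        simp
    _ ≤ ∑ m, f (∑ i with φ i = m, v i) :=
        sum_le_sum fun m _ => by linarith [hsum {i | φ i = m}]

theorem sum_exposed_le_of_respectsInclusions [MeasurableSpace X] (μ : Measure X) (f : ℝ → ℝ)
    (hsuper : ∀ x y : ℝ, 0 ≤ x → 0 ≤ y → (f x - f 0) + (f y - f 0) ≤ f (x + y) - f 0)
    {S : Fin n → Set X} (hSm : ∀ i, MeasurableSet (S i)) (hSfin : ∀ i, μ (S i) ≠ ⊤)
    (hS : IsLaminar S) {α : Equiv.Perm (Fin n)} (hα : RespectsInclusions S α)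
    (β : Equiv.Perm (Fin n)) :
    ∑ k, f (μ (exposed S α k)).toReal ≤ ∑ m, f (μ (exposed S β m)).toReal := by
  have hmeas (k : Fin n) : MeasurableSet (exposed S α k) :=
    (hSm _).diff (.iUnion fun _ => .iUnion fun _ => hSm _)
  have hvol (m : Fin n) : (μ (exposed S β m)).toReal =
      ∑ k with firstCover S β (α k) = m, (μ (exposed S α k)).toReal := by
    rw [exposed_eq_biUnion_exposed hS hα,
      measure_biUnion_finset (fun _ _ _ _ h => pairwise_disjoint_exposed S α h)
        fun k _ => hmeas k,
      ENNReal.toReal_sum fun _ _ => ne_top_of_le_ne_top (hSfin _) (measure_mono exposed_subset)]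
  simp_rw [hvol]
  exact sum_le_sum_fiberwise_of_superadditive f hsuper _ _ fun _ => ENNReal.toReal_nonneg

end LaminarOrdering

open LaminarOrdering in
theorem stmt_7_general (n : ℕ) (a b : Fin n → ℝ)
    (hlam : ∀ i j : Fin n,
      Set.Ico (a i) (b i) ∩ Set.Ico (a j) (b j) = ∅ ∨
      Set.Ico (a i) (b i) ⊆ Set.Ico (a j) (b j) ∨
      Set.Ico (a j) (b j) ⊆ Set.Ico (a i) (b i))
    (f : ℝ → ℝ)
    (hsuper : ∀ x y : ℝ, 0 ≤ x → 0 ≤ y →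
      (f x - f 0) + (f y - f 0) ≤ f (x + y) - f 0)
    (α : Equiv.Perm (Fin n))
    (hresp : ∀ i j : Fin n,
      Set.Ico (a i) (b i) ⊂ Set.Ico (a j) (b j) → α.symm i < α.symm j) :
    ∀ β : Equiv.Perm (Fin n),
      exposedCost (fun l => Set.Ico (a l) (b l)) f α ≤
      exposedCost (fun l => Set.Ico (a l) (b l)) f β :=
  sum_exposed_le_of_respectsInclusions volume f hsuper (fun _ => measurableSet_Ico)
    (fun _ => by simp [Real.volume_Ico]) hlam hresp

/-- For a laminar family of half-open intervals and a cost function `f` such that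
`g x = f x - f 0` is super-additive on the nonnegative reals, every ordering that
respects the inclusions (whenever `I_i ⊊ I_j`, interval `i` comes before `j`)
has minimum cost among all orderings. -/
theorem stmt_7 (n : ℕ) (a b : Fin n → ℝ) (hab : ∀ i, a i ≤ b i)
    (hlam : ∀ i j : Fin n,
      Set.Ico (a i) (b i) ∩ Set.Ico (a j) (b j) = ∅ ∨
      Set.Ico (a i) (b i) ⊆ Set.Ico (a j) (b j) ∨
      Set.Ico (a j) (b j) ⊆ Set.Ico (a i) (b i))
    (f : ℝ → ℝ)
    (hsuper : ∀ x y : ℝ, 0 ≤ x → 0 ≤ y →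
      (f x - f 0) + (f y - f 0) ≤ f (x + y) - f 0)
    (α : Equiv.Perm (Fin n))
    (hresp : ∀ i j : Fin n,
      Set.Ico (a i) (b i) ⊂ Set.Ico (a j) (b j) → α.symm i < α.symm j) :
    ∀ β : Equiv.Perm (Fin n),
      exposedCost (fun l => Set.Ico (a l) (b l)) f α ≤
      exposedCost (fun l => Set.Ico (a l) (b l)) f β :=
  stmt_7_general n a b hlam f hsuper α hresp
end

section
/- Let I_1, …, I_n be half-open intervals I_i = [a_i, b_i) with a_i ≤ b_i forming a laminar family (for any two of the intervals, either they are disjoint or one is contained in the other), and let f : ℝ → ℝ be such that g(x) = f(x) − f(0) is sub-additive on the nonnegative reals, i.e., g(x+y) ≤ g(x) + g(y) for all x, y ≥ 0. Then every ordering α such that whenever I_i ⊊ I_j the index j appears before i in α has minimum cost among all orderings. -/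
/-!
If `α` lists every set before the sets strictly inside it, then by laminarity each point of `S i`
is exposed in `α` exactly at the first position of `α` whose set contains `S i`. Hence the exposed
part of `α` at position `m` is the disjoint union of the exposed parts of `β` at those `k` for
which the first cover of `S (β k)` is `m`, and subadditivity of `g = f - f 0` compares the two
costs; the `f 0` terms balance because both sums have `n` terms.
-/

open MeasureTheory

namespace ExposedCost

variable {X : Type*} {n : ℕ} {S : Fin n → Set X}

def exposedPart (S : Fin n → Set X) (γ : Equiv.Perm (Fin n)) (k : Fin n) : Set X :=
  S (γ k) \ ⋃ (j : Fin n) (_ : j < k), S (γ j)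

lemma exposedCost_eq_sum_exposedPart (S : Fin n → Set ℝ) (f : ℝ → ℝ) (γ : Equiv.Perm (Fin n)) :
    exposedCost S f γ = ∑ k, f (volume (exposedPart S γ k)).toReal := rfl

lemma mem_exposedPart {γ : Equiv.Perm (Fin n)} {k : Fin n} {x : X} :
    x ∈ exposedPart S γ k ↔ x ∈ S (γ k) ∧ ∀ j < k, x ∉ S (γ j) := by
  simp only [exposedPart, Set.mem_sdiff, Set.mem_iUnion, not_exists]

lemma eq_of_mem_exposedPart {γ : Equiv.Perm (Fin n)} {p q : Fin n} {x : X}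
    (hp : x ∈ exposedPart S γ p) (hq : x ∈ exposedPart S γ q) : p = q := by
  rw [mem_exposedPart] at hp hq
  rcases lt_trichotomy p q with h | h | h
  · exact absurd hp.1 (hq.2 p h)
  · exact h
  · exact absurd hq.1 (hp.2 q h)

lemma disjoint_exposedPart {γ : Equiv.Perm (Fin n)} {p q : Fin n} (h : p ≠ q) :
    Disjoint (exposedPart S γ p) (exposedPart S γ q) :=
  Set.disjoint_left.2 fun _ hp hq => h (eq_of_mem_exposedPart hp hq)

lemma exists_mem_exposedPart (γ : Equiv.Perm (Fin n)) {i : Fin n} {x : X} (hx : x ∈ S i) :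
    ∃ k, x ∈ exposedPart S γ k := by
  obtain ⟨k, hk, hmin⟩ :=
    wellFounded_lt.has_min {k | x ∈ S (γ k)} ⟨γ.symm i, by simpa using hx⟩
  exact ⟨k, mem_exposedPart.2 ⟨hk, fun j hj hxj => hmin j hxj hj⟩⟩

noncomputable def firstCover (S : Fin n → Set X) (α : Equiv.Perm (Fin n)) (i : Fin n) : Fin n :=
  wellFounded_lt.min {p | S i ⊆ S (α p)} ⟨α.symm i, by simp⟩

lemma subset_firstCover (α : Equiv.Perm (Fin n)) (i : Fin n) : S i ⊆ S (α (firstCover S α i)) :=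
  wellFounded_lt.min_mem {p | S i ⊆ S (α p)} _

lemma firstCover_le {α : Equiv.Perm (Fin n)} {i p : Fin n} (h : S i ⊆ S (α p)) :
    firstCover S α i ≤ p :=
  not_lt.1 (wellFounded_lt.not_lt_min {p | S i ⊆ S (α p)} h)

section Laminar

variable {α : Equiv.Perm (Fin n)}
  (hlam : ∀ i j, Disjoint (S i) (S j) ∨ S i ⊆ S j ∨ S j ⊆ S i)
  (hresp : ∀ i j, S i ⊂ S j → α.symm j < α.symm i)
include hlam hresp

lemma subset_exposedPart_firstCover (i : Fin n) :
    S i ⊆ exposedPart S α (firstCover S α i) := by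
  set P := firstCover S α i
  intro x hx
  refine mem_exposedPart.2 ⟨subset_firstCover α i hx, fun j hjP hxj => ?_⟩
  rcases hlam (α j) i with hdisj | hji | hij
  · exact Set.disjoint_left.1 hdisj hxj hx
  · by_cases hPj : S (α P) ⊆ S (α j)
    · exact (firstCover_le ((subset_firstCover α i).trans hPj)).not_gt hjP
    · have hlt := hresp _ _ ((hji.trans (subset_firstCover α i)).ssubset_of_not_subset hPj)
      simp only [Equiv.symm_apply_apply] at hlt
      exact hlt.not_gt hjP
  · exact (firstCover_le hij).not_gt hjP

lemma exposedPart_eq_biUnion (β : Equiv.Perm (Fin n)) (m : Fin n) :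
    exposedPart S α m =
      ⋃ k ∈ Finset.univ.filter (fun k => firstCover S α (β k) = m), exposedPart S β k := by
  have hsub : ∀ k, exposedPart S β k ⊆ exposedPart S α (firstCover S α (β k)) := fun k =>
    Set.sdiff_subset.trans (subset_exposedPart_firstCover hlam hresp (β k))
  ext x
  simp only [Set.mem_iUnion, Finset.mem_filter, Finset.mem_univ, true_and, exists_prop]
  constructor
  · intro hx
    obtain ⟨k, hk⟩ := exists_mem_exposedPart β (mem_exposedPart.1 hx).1
    exact ⟨k, eq_of_mem_exposedPart (hsub k hk) hx, hk⟩
  · rintro ⟨k, rfl, hk⟩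
    exact hsub k hk

lemma measure_exposedPart_eq_sum {_ : MeasurableSpace X} (μ : Measure X)
    (hmeas : ∀ l, MeasurableSet (S l)) (β : Equiv.Perm (Fin n)) (m : Fin n) :
    μ (exposedPart S α m) =
      ∑ k ∈ Finset.univ.filter (fun k => firstCover S α (β k) = m), μ (exposedPart S β k) := by
  rw [exposedPart_eq_biUnion hlam hresp β m]
  refine measure_biUnion_finset (fun p _ q _ hpq => disjoint_exposedPart hpq) fun k _ => ?_
  exact (hmeas _).diff (.iUnion fun _ => .iUnion fun _ => hmeas _)

end Laminar

section Subadditive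

variable {f : ℝ → ℝ}
  (hf : ∀ x y : ℝ, 0 ≤ x → 0 ≤ y → f (x + y) - f 0 ≤ (f x - f 0) + (f y - f 0))
include hf

lemma sub_apply_sum_le {ι : Type*} {s : Finset ι} {y : ι → ℝ} (hy : ∀ i ∈ s, 0 ≤ y i) :
    f (∑ i ∈ s, y i) - f 0 ≤ ∑ i ∈ s, (f (y i) - f 0) :=
  Finset.le_sum_of_subadditive_on_pred (fun x => f x - f 0) (0 ≤ ·) (sub_self _).le hf
    (fun _ _ => add_nonneg) y hy

lemma sum_apply_sum_fiberwise_le {ι : Type*} [Fintype ι] [DecidableEq ι] (t : ι → ι)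
    {v : ι → ℝ} (hv : ∀ i, 0 ≤ v i) :
    ∑ m, f (∑ k ∈ Finset.univ.filter (fun k => t k = m), v k) ≤ ∑ k, f (v k) := by
  have key : ∑ m, (f (∑ k ∈ Finset.univ.filter (fun k => t k = m), v k) - f 0) ≤
      ∑ k, (f (v k) - f 0) :=
    calc _ ≤ ∑ m, ∑ k ∈ Finset.univ.filter (fun k => t k = m), (f (v k) - f 0) :=
          Finset.sum_le_sum fun m _ => sub_apply_sum_le hf fun k _ => hv k
      _ = ∑ k, (f (v k) - f 0) := Finset.sum_fiberwise _ t _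
  simp only [Finset.sum_sub_distrib] at key
  linarith

end Subadditive

theorem exposedCost_le_of_laminar (S : Fin n → Set ℝ) (hmeas : ∀ l, MeasurableSet (S l))
    (hfin : ∀ l, volume (S l) ≠ ⊤)
    (hlam : ∀ i j, Disjoint (S i) (S j) ∨ S i ⊆ S j ∨ S j ⊆ S i) {f : ℝ → ℝ}
    (hf : ∀ x y : ℝ, 0 ≤ x → 0 ≤ y → f (x + y) - f 0 ≤ (f x - f 0) + (f y - f 0))
    {α : Equiv.Perm (Fin n)} (hresp : ∀ i j, S i ⊂ S j → α.symm j < α.symm i)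
    (β : Equiv.Perm (Fin n)) :
    exposedCost S f α ≤ exposedCost S f β := by
  have hvol : ∀ m, (volume (exposedPart S α m)).toReal =
      ∑ k ∈ Finset.univ.filter (fun k => firstCover S α (β k) = m),
        (volume (exposedPart S β k)).toReal := fun m => by
    rw [measure_exposedPart_eq_sum hlam hresp volume hmeas β m, ENNReal.toReal_sum]
    exact fun k _ => ne_top_of_le_ne_top (hfin (β k)) (measure_mono Set.sdiff_subset)
  simp only [exposedCost_eq_sum_exposedPart, hvol]
  exact sum_apply_sum_fiberwise_le hf _ fun _ => ENNReal.toReal_nonneg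

end ExposedCost

theorem stmt_8_general (n : ℕ) (a b : Fin n → ℝ)
    (hlam : ∀ i j : Fin n,
      Set.Ico (a i) (b i) ∩ Set.Ico (a j) (b j) = ∅ ∨
      Set.Ico (a i) (b i) ⊆ Set.Ico (a j) (b j) ∨
      Set.Ico (a j) (b j) ⊆ Set.Ico (a i) (b i))
    (f : ℝ → ℝ)
    (hsuper : ∀ x y : ℝ, 0 ≤ x → 0 ≤ y →
      f (x + y) - f 0 ≤ (f x - f 0) + (f y - f 0))
    (α : Equiv.Perm (Fin n))
    (hresp : ∀ i j : Fin n,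
      Set.Ico (a i) (b i) ⊂ Set.Ico (a j) (b j) → α.symm j < α.symm i) :
    ∀ β : Equiv.Perm (Fin n),
      exposedCost (fun l => Set.Ico (a l) (b l)) f α ≤
      exposedCost (fun l => Set.Ico (a l) (b l)) f β :=
  ExposedCost.exposedCost_le_of_laminar _ (fun _ => measurableSet_Ico)
    (fun _ => by simp [Real.volume_Ico])
    (fun i j => (hlam i j).imp_left Set.disjoint_iff_inter_eq_empty.2) hsuper hresp

/-- For a laminar family of half-open intervals and a cost function `f` such that
`g x = f x - f 0` is sub-additive on the nonnegative reals, every ordering that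
respects the inclusions (whenever `I_i ⊊ I_j`, interval `j` comes before `i`)
has minimum cost among all orderings. -/
theorem stmt_8 (n : ℕ) (a b : Fin n → ℝ) (hab : ∀ i, a i ≤ b i)
    (hlam : ∀ i j : Fin n,
      Set.Ico (a i) (b i) ∩ Set.Ico (a j) (b j) = ∅ ∨
      Set.Ico (a i) (b i) ⊆ Set.Ico (a j) (b j) ∨
      Set.Ico (a j) (b j) ⊆ Set.Ico (a i) (b i))
    (f : ℝ → ℝ)
    (hsuper : ∀ x y : ℝ, 0 ≤ x → 0 ≤ y →
      f (x + y) - f 0 ≤ (f x - f 0) + (f y - f 0))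
    (α : Equiv.Perm (Fin n))
    (hresp : ∀ i j : Fin n,
      Set.Ico (a i) (b i) ⊂ Set.Ico (a j) (b j) → α.symm j < α.symm i) :
    ∀ β : Equiv.Perm (Fin n),
      exposedCost (fun l => Set.Ico (a l) (b l)) f α ≤
      exposedCost (fun l => Set.Ico (a l) (b l)) f β :=
  stmt_8_general n a b hlam f hsuper α hresp
end

section
/- Let I_1, …, I_n be half-open intervals I_i = [a_i, b_i) with a_i ≤ b_i, and let f : ℝ → ℝ be non-decreasing. Then there exists an ordering α that minimizes the bottleneck value and whose first interval has minimum length, i.e., b_{α(1)} − a_{α(1)} ≤ b_j − a_j for all j ∈ {1, …, n}. -/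
/-!
Take an optimal ordering `β` and move a shortest interval `m` to the front, shifting the
intervals that preceded it back by one. Every other set keeps all its predecessors and gains
at most `m`, so its exposed part can only shrink; `m` itself is now exposed in full, but its
length is at most that of `β`'s first interval, which was exposed in full too. As `f` is
monotone, the bottleneck value does not increase.
-/

open MeasureTheory

noncomputable def bottleneck {n : ℕ} (S : Fin n → Set ℝ) (f : ℝ → ℝ)
    (α : Equiv.Perm (Fin n)) : ℝ :=
  ⨆ k : Fin n, f ((volume (S (α k) \ ⋃ (j : Fin n) (_ : j < k), S (α j))).toReal)

namespace Fin

theorem cycleRange_lt_cycleRange {n : ℕ} {p j l : Fin (n + 1)} (hl : l ≠ p) (hjl : j < l) :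
    p.cycleRange j < p.cycleRange l := by
  obtain ⟨l', rfl⟩ := exists_succAbove_eq hl
  by_cases hj : j = p
  · subst hj
    simp only [cycleRange_self, cycleRange_succAbove]
    exact succ_pos l'
  · obtain ⟨j', rfl⟩ := exists_succAbove_eq hj
    simpa only [cycleRange_succAbove, succ_lt_succ_iff, succAbove_lt_succAbove_iff] using hjl

end Fin

section Bottleneck

variable {n : ℕ}

theorem le_bottleneck (S : Fin n → Set ℝ) (f : ℝ → ℝ) (α : Equiv.Perm (Fin n))
    (k : Fin n) :
    f ((volume (S (α k) \ ⋃ (j : Fin n) (_ : j < k), S (α j))).toReal) ≤ bottleneck S f α :=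
  Finite.le_ciSup
    (fun k => f ((volume (S (α k) \ ⋃ (j : Fin n) (_ : j < k), S (α j))).toReal)) k

theorem exposed_subset_exposed {ι X : Type*} [Preorder ι] (S : ι → Set X)
    {α β : Equiv.Perm ι} {k l : ι} (hkl : α k = β l) (hpre : ∀ j < l, α.symm (β j) < k) :
    S (α k) \ ⋃ (j : ι) (_ : j < k), S (α j) ⊆
      S (β l) \ ⋃ (j : ι) (_ : j < l), S (β j) := by
  rw [hkl]
  refine Set.sdiff_subset_sdiff_right (Set.iUnion₂_subset fun j hj => ?_)
  rw [← α.apply_symm_apply (β j)]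
  exact Set.subset_biUnion_of_mem (u := fun i => S (α i)) (hpre j hj)

/-- `β * p.cycleRange⁻¹` is the ordering `β` with its `p`-th set moved to the front. -/
theorem bottleneck_mul_cycleRange_inv_le {S : Fin (n + 1) → Set ℝ} {f : ℝ → ℝ}
    (hS : ∀ i, volume (S i) ≠ ⊤) (hf : Monotone f) (β : Equiv.Perm (Fin (n + 1)))
    (p : Fin (n + 1)) (hp : volume (S (β p)) ≤ volume (S (β 0))) :
    bottleneck S f (β * p.cycleRange⁻¹) ≤ bottleneck S f β := by
  refine ciSup_le fun k => ?_
  obtain ⟨l, rfl⟩ := p.cycleRange.surjective k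
  have hα : ∀ i, (β * p.cycleRange⁻¹) (p.cycleRange i) = β i := by simp
  have hα_symm : ∀ i, (β * p.cycleRange⁻¹).symm (β i) = p.cycleRange i := fun i => by
    rw [Equiv.symm_apply_eq, hα]
  by_cases hl : l = p
  · subst hl
    refine le_trans (hf ?_) (le_bottleneck S f β 0)
    rw [hα]
    simp only [Fin.cycleRange_self, Fin.not_lt_zero, Set.iUnion_of_empty, Set.iUnion_empty,
      Set.sdiff_empty]
    exact ENNReal.toReal_mono (hS _) hp
  · refine le_trans (hf ?_) (le_bottleneck S f β l)
    refine measureReal_mono (exposed_subset_exposed S (hα l) fun j hj => ?_)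
      (measure_ne_top_of_subset Set.sdiff_subset (hS _))
    rw [hα_symm]
    exact Fin.cycleRange_lt_cycleRange hl hj

end Bottleneck

theorem stmt_9_general (n : ℕ) (hn : 0 < n) (a b : Fin n → ℝ)
    (f : ℝ → ℝ) (hf : Monotone f) :
    ∃ α : Equiv.Perm (Fin n),
      (∀ β : Equiv.Perm (Fin n),
        bottleneck (fun i => Set.Ico (a i) (b i)) f α ≤
        bottleneck (fun i => Set.Ico (a i) (b i)) f β) ∧
      ∀ j : Fin n, b (α ⟨0, hn⟩) - a (α ⟨0, hn⟩) ≤ b j - a j := by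
  obtain ⟨N, rfl⟩ : ∃ N, n = N + 1 := ⟨n - 1, by omega⟩
  obtain ⟨m, hm⟩ := Finite.exists_min fun i : Fin (N + 1) => b i - a i
  obtain ⟨β, hβ⟩ := Finite.exists_min (bottleneck (fun i => Set.Ico (a i) (b i)) f)
  have hα0 : (β * (β⁻¹ m).cycleRange⁻¹) ⟨0, hn⟩ = m := by simp [Equiv.Perm.inv_def]
  refine ⟨β * (β⁻¹ m).cycleRange⁻¹, fun γ => le_trans ?_ (hβ γ),
    fun j => by rw [hα0]; exact hm j⟩
  refine bottleneck_mul_cycleRange_inv_le (by simp [Real.volume_Ico]) hf β _ ?_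
  simpa [Real.volume_Ico] using ENNReal.ofReal_le_ofReal (hm (β 0))

/-- For half-open intervals and a non-decreasing cost function, there is an ordering
minimizing the bottleneck value that starts with an interval of minimum length. -/
theorem stmt_9 (n : ℕ) (hn : 0 < n) (a b : Fin n → ℝ) (hab : ∀ i, a i ≤ b i)
    (f : ℝ → ℝ) (hf : Monotone f) :
    ∃ α : Equiv.Perm (Fin n),
      (∀ β : Equiv.Perm (Fin n),
        bottleneck (fun i => Set.Ico (a i) (b i)) f α ≤
        bottleneck (fun i => Set.Ico (a i) (b i)) f β) ∧
      ∀ j : Fin n, b (α ⟨0, hn⟩) - a (α ⟨0, hn⟩) ≤ b j - a j :=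
  stmt_9_general n hn a b f hf
end

section
/- Let n ≥ 2, let I_1, …, I_n be half-open intervals I_i = [a_i, b_i) with a_i ≤ b_i, let f : ℝ → ℝ be non-decreasing, and let i₀ be an index with b_{i₀} − a_{i₀} ≤ b_j − a_j for all j. Consider the reduced family of n−1 measurable sets J_j = I_j \ I_{i₀}, for j ∈ {1, …, n} \ {i₀}, with the bottleneck value of orderings of this family defined in the same way. If β is an ordering of the reduced family that minimizes its bottleneck value, then the ordering of the original family that places i₀ first and then processes the remaining indices in the order given by β minimizes the bottleneck value over all orderings of I_1, …, I_n. -/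
open MeasureTheory

lemma aux_term_le {f : ℝ → ℝ} (hf : Monotone f) {E E' : Set ℝ} (h : E ⊆ E')
    (h' : volume E' ≠ ⊤) :
    f (volume E).toReal ≤ f (volume E').toReal :=
  hf (ENNReal.toReal_mono h' (measure_mono h))

/-- Let `I_{i₀}` be an interval of minimum length among the `n+1 ≥ 2` half-open intervals
`I_i = [a i, b i)` and let `f` be non-decreasing. If `β` minimizes the bottleneck value of
the reduced family `J_j = I_j \ I_{i₀}` (indexed by the remaining `n` indices, via
`i₀.succAbove`), then the ordering `α` of the original family that places `i₀` first and
then follows `β` minimizes the bottleneck value over all orderings. -/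
theorem stmt_10 (n : ℕ) (hn : 1 ≤ n) (a b : Fin (n + 1) → ℝ) (hab : ∀ i, a i ≤ b i)
    (f : ℝ → ℝ) (hf : Monotone f)
    (i₀ : Fin (n + 1)) (hi₀ : ∀ j, b i₀ - a i₀ ≤ b j - a j)
    (β : Equiv.Perm (Fin n))
    (hβ : ∀ γ : Equiv.Perm (Fin n),
      bottleneck (fun j => Set.Ico (a (i₀.succAbove j)) (b (i₀.succAbove j)) \
        Set.Ico (a i₀) (b i₀)) f β ≤
      bottleneck (fun j => Set.Ico (a (i₀.succAbove j)) (b (i₀.succAbove j)) \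
        Set.Ico (a i₀) (b i₀)) f γ)
    (α : Equiv.Perm (Fin (n + 1)))
    (hα0 : α 0 = i₀)
    (hαs : ∀ k : Fin n, α k.succ = i₀.succAbove (β k)) :
    ∀ γ : Equiv.Perm (Fin (n + 1)),
      bottleneck (fun i => Set.Ico (a i) (b i)) f α ≤
      bottleneck (fun i => Set.Ico (a i) (b i)) f γ := by
  haveI : Nonempty (Fin n) := Fin.pos_iff_nonempty.mp hn
  intro γ
  set I : Fin (n + 1) → Set ℝ := fun i => Set.Ico (a i) (b i) with hI
  set J : Fin n → Set ℝ := fun j => I (i₀.succAbove j) \ I i₀ with hJ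
  -- finiteness of volumes of subsets of the intervals
  have hvolI : ∀ i, volume (I i) ≠ ⊤ := by
    intro i
    simp [hI, Real.volume_Ico]
  have hfin : ∀ i (E : Set ℝ), E ⊆ I i → volume E ≠ ⊤ := fun i E h =>
    ne_top_of_le_ne_top (hvolI i) (measure_mono h)
  -- the position of i₀ in γ
  set p : Fin (n + 1) := γ.symm i₀ with hp
  have hγp : γ p = i₀ := γ.apply_symm_apply i₀
  -- induced permutation of the reduced family
  set e : Option (Fin n) ≃ Option (Fin n) :=
    (finSuccEquiv' p).symm.trans (γ.trans (finSuccEquiv' i₀)) with he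
  set γ' : Equiv.Perm (Fin n) := Equiv.removeNone e with hγ'
  have key : ∀ k : Fin n, γ (p.succAbove k) = i₀.succAbove (γ' k) := by
    intro k
    have hne : γ (p.succAbove k) ≠ i₀ := by
      intro h
      exact Fin.succAbove_ne p k (γ.injective (h.trans hγp.symm))
    obtain ⟨j, hj⟩ := Fin.exists_succAbove_eq hne
    have h1 : e (some k) = some j := by
      simp only [he, Equiv.trans_apply, finSuccEquiv'_symm_some]
      rw [← hj, finSuccEquiv'_succAbove]
    have h2 : some (γ' k) = e (some k) := Equiv.removeNone_some e ⟨j, h1⟩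
    rw [h1] at h2
    rw [← hj, Option.some_injective _ h2.symm]
  -- Step 1: each term of γ' on the reduced family is bounded by bottleneck of γ
  have step1 : bottleneck J f γ' ≤ bottleneck I f γ := by
    apply ciSup_le
    intro k
    have hsub : J (γ' k) \ ⋃ (j : Fin n) (_ : j < k), J (γ' j) ⊆
        I (γ (p.succAbove k)) \ ⋃ (m : Fin (n + 1)) (_ : m < p.succAbove k), I (γ m) := by
      intro x hx
      obtain ⟨hx1, hx2⟩ := hx
      have hxI : x ∈ I (γ (p.succAbove k)) := by
        rw [key k]; exact hx1.1
      have hxI0 : x ∉ I i₀ := hx1.2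
      refine ⟨hxI, ?_⟩
      intro hmem
      rw [Set.mem_iUnion] at hmem
      obtain ⟨m, hm⟩ := hmem
      rw [Set.mem_iUnion] at hm
      obtain ⟨hmlt, hxm⟩ := hm
      by_cases hmp : m = p
      · rw [hmp, hγp] at hxm; exact hxI0 hxm
      · obtain ⟨j, hj⟩ := Fin.exists_succAbove_eq hmp
        have hjk : j < k := by
          rw [← hj] at hmlt
          exact (Fin.succAbove_lt_succAbove_iff).mp hmlt
        apply hx2
        rw [Set.mem_iUnion]
        refine ⟨j, ?_⟩
        rw [Set.mem_iUnion]
        refine ⟨hjk, ?_⟩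
        rw [hJ]
        refine ⟨?_, hxI0⟩
        rw [← key j, hj]
        exact hxm
    calc f ((volume (J (γ' k) \ ⋃ (j : Fin n) (_ : j < k), J (γ' j))).toReal)
        ≤ f ((volume (I (γ (p.succAbove k)) \
            ⋃ (m : Fin (n + 1)) (_ : m < p.succAbove k), I (γ m))).toReal) :=
          aux_term_le hf hsub (hfin _ _ Set.diff_subset)
      _ ≤ bottleneck I f γ := by
          unfold bottleneck
          exact le_ciSup (f := fun k : Fin (n + 1) =>
            f ((volume (I (γ k) \ ⋃ (j : Fin (n + 1)) (_ : j < k), I (γ j))).toReal))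
            (Set.Finite.bddAbove (Set.finite_range _)) (p.succAbove k)
  -- Step 2: bound each term of α
  apply ciSup_le
  intro k
  induction k using Fin.cases with
  | zero =>
      -- first exposed part of α is I i₀
      have hU : ⋃ (j : Fin (n + 1)) (_ : j < (0 : Fin (n + 1))), I (α j) = ∅ := by
        simp
      rw [hα0, hU, Set.diff_empty]
      have h0 : ⋃ (j : Fin (n + 1)) (_ : j < (0 : Fin (n + 1))), I (γ j) = ∅ := by
        simp
      have hle : f ((volume (I i₀)).toReal) ≤
          f ((volume (I (γ 0) \ ⋃ (j : Fin (n + 1)) (_ : j < (0 : Fin (n + 1))), I (γ j))).toReal) := by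
        rw [h0, Set.diff_empty]
        apply hf
        simp only [hI, Real.volume_Ico, ENNReal.toReal_ofReal (sub_nonneg.2 (hab _)),
          ENNReal.toReal_ofReal (sub_nonneg.2 (hab (γ 0)))]
        exact hi₀ (γ 0)
      refine hle.trans ?_
      unfold bottleneck
      exact le_ciSup (f := fun k : Fin (n + 1) =>
        f ((volume (I (γ k) \ ⋃ (j : Fin (n + 1)) (_ : j < k), I (γ j))).toReal))
        (Set.Finite.bddAbove (Set.finite_range _)) (0 : Fin (n + 1))
  | succ m =>
      -- exposed part of α at m.succ equals that of β at m in the reduced family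
      have hU : ⋃ (j : Fin (n + 1)) (_ : j < m.succ), I (α j) =
          I i₀ ∪ ⋃ (j : Fin n) (_ : j < m), I (i₀.succAbove (β j)) := by
        ext x
        simp only [Set.mem_iUnion, Set.mem_union]
        constructor
        · rintro ⟨j, hj, hx⟩
          induction j using Fin.cases with
          | zero => left; rwa [hα0] at hx
          | succ j' =>
              right
              exact ⟨j', Fin.succ_lt_succ_iff.mp hj, by rwa [hαs] at hx⟩
        · rintro (hx | ⟨j', hj', hx⟩)
          · exact ⟨0, Fin.succ_pos m, by rwa [hα0]⟩
          · exact ⟨j'.succ, Fin.succ_lt_succ_iff.mpr hj', by rwa [hαs]⟩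
      have hEq : I (α m.succ) \ ⋃ (j : Fin (n + 1)) (_ : j < m.succ), I (α j) =
          J (β m) \ ⋃ (j : Fin n) (_ : j < m), J (β j) := by
        rw [hU, hαs]
        ext x
        constructor
        · rintro ⟨hx, hnx⟩
          have hx0 : x ∉ I i₀ := fun h => hnx (Or.inl h)
          refine ⟨⟨hx, hx0⟩, ?_⟩
          intro hmem
          rw [Set.mem_iUnion] at hmem
          obtain ⟨j, hmem⟩ := hmem
          rw [Set.mem_iUnion] at hmem
          obtain ⟨hj, hmem⟩ := hmem
          exact hnx (Or.inr (Set.mem_iUnion.mpr ⟨j, Set.mem_iUnion.mpr ⟨hj, hmem.1⟩⟩))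
        · rintro ⟨⟨hx, hx0⟩, hnx⟩
          refine ⟨hx, ?_⟩
          rintro (h | h)
          · exact hx0 h
          · rw [Set.mem_iUnion] at h
            obtain ⟨j, h⟩ := h
            rw [Set.mem_iUnion] at h
            obtain ⟨hj, h⟩ := h
            exact hnx (Set.mem_iUnion.mpr ⟨j, Set.mem_iUnion.mpr ⟨hj, ⟨h, hx0⟩⟩⟩)
      rw [hEq]
      calc f ((volume (J (β m) \ ⋃ (j : Fin n) (_ : j < m), J (β j))).toReal)
          ≤ bottleneck J f β := by
            unfold bottleneck
            exact le_ciSup (f := fun k : Fin n =>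
              f ((volume (J (β k) \ ⋃ (j : Fin n) (_ : j < k), J (β j))).toReal))
              (Set.Finite.bddAbove (Set.finite_range _)) m
        _ ≤ bottleneck J f γ' := hβ γ'
        _ ≤ bottleneck I f γ := step1
end

section
/- Let S_1, …, S_n ⊆ ℝ be Lebesgue-measurable sets of finite measure and let f : ℝ → ℝ be non-decreasing. Suppose the ordering α is greedy in the following sense: for every k ∈ {1, …, n} and every m ∈ {k, k+1, …, n}, λ(S_{α(k)} \ ⋃_{j<k} S_{α(j)}) ≤ λ(S_{α(m)} \ ⋃_{j<k} S_{α(j)}). Then α minimizes the bottleneck value over all orderings. -/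
open MeasureTheory

/-- The greedy ordering (always picking next a set with smallest exposed part relative to
the already-chosen sets) minimizes the bottleneck value when `f` is non-decreasing. -/
theorem stmt_11 (n : ℕ) (S : Fin n → Set ℝ)
    (hmeas : ∀ i, MeasurableSet (S i)) (hfin : ∀ i, volume (S i) ≠ ⊤)
    (f : ℝ → ℝ) (hf : Monotone f)
    (α : Equiv.Perm (Fin n))
    (hgreedy : ∀ k m : Fin n, k ≤ m →
      volume (S (α k) \ ⋃ (j : Fin n) (_ : j < k), S (α j)) ≤
      volume (S (α m) \ ⋃ (j : Fin n) (_ : j < k), S (α j))) :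
    ∀ β : Equiv.Perm (Fin n), bottleneck S f α ≤ bottleneck S f β := by
  intro β
  rcases isEmpty_or_nonempty (Fin n) with he | hne
  · unfold bottleneck
    have h1 : ∀ γ : Equiv.Perm (Fin n),
        (⨆ k : Fin n, f ((volume (S (γ k) \ ⋃ (j : Fin n) (_ : j < k), S (γ j))).toReal)) = 0 := by
      intro γ
      exact Real.iSup_of_isEmpty _
    rw [h1 α, h1 β]
  unfold bottleneck
  apply ciSup_le
  intro k
  -- the set of β-positions whose set has α-index ≥ k is nonempty
  have hex : ∃ m : Fin n, k ≤ α.symm (β m) := by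
    by_contra h
    push_neg at h
    have hinj : Set.InjOn (fun m => α.symm (β m)) (Finset.Iic k : Finset (Fin n)) := by
      intro a _ b _ hab
      simpa using hab
    have hcard := Finset.card_le_card_of_injOn (fun m => α.symm (β m))
      (fun m _ => Finset.mem_Iio.mpr (h m)) hinj
    simp only [Fin.card_Iic, Fin.card_Iio] at hcard
    omega
  set T : Finset (Fin n) := Finset.univ.filter (fun m => k ≤ α.symm (β m)) with hT
  have hTne : T.Nonempty := by
    obtain ⟨m, hm⟩ := hex
    exact ⟨m, by simp [hT, hm]⟩
  set m₀ := T.min' hTne with hm₀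
  have hm₀T : m₀ ∈ T := T.min'_mem hTne
  have hki : k ≤ α.symm (β m₀) := by
    have := hm₀T
    simpa [hT] using this
  -- union of earlier β-sets is contained in union of first k α-sets
  have hsub : (⋃ (j : Fin n) (_ : j < m₀), S (β j)) ⊆
      (⋃ (j : Fin n) (_ : j < k), S (α j)) := by
    refine Set.iUnion₂_subset fun j hj => ?_
    have hjk : α.symm (β j) < k := by
      by_contra hc
      push_neg at hc
      have hjT : j ∈ T := by simp [hT, hc]
      exact absurd (T.min'_le j hjT) (not_le.mpr hj)
    intro x hx
    exact Set.mem_iUnion₂.mpr ⟨α.symm (β j), hjk, by simpa using hx⟩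
  -- measure comparison
  have hmeasle : volume (S (α k) \ ⋃ (j : Fin n) (_ : j < k), S (α j)) ≤
      volume (S (β m₀) \ ⋃ (j : Fin n) (_ : j < m₀), S (β j)) := by
    calc volume (S (α k) \ ⋃ (j : Fin n) (_ : j < k), S (α j))
        ≤ volume (S (α (α.symm (β m₀))) \ ⋃ (j : Fin n) (_ : j < k), S (α j)) :=
          hgreedy k _ hki
      _ = volume (S (β m₀) \ ⋃ (j : Fin n) (_ : j < k), S (α j)) := by
          rw [Equiv.apply_symm_apply]
      _ ≤ volume (S (β m₀) \ ⋃ (j : Fin n) (_ : j < m₀), S (β j)) :=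
          measure_mono (Set.diff_subset_diff_right hsub)
  have hfinm : volume (S (β m₀) \ ⋃ (j : Fin n) (_ : j < m₀), S (β j)) ≠ ⊤ :=
    fun h => hfin (β m₀) (top_le_iff.mp (h ▸ measure_mono Set.diff_subset))
  have hle : f ((volume (S (α k) \ ⋃ (j : Fin n) (_ : j < k), S (α j))).toReal) ≤
      f ((volume (S (β m₀) \ ⋃ (j : Fin n) (_ : j < m₀), S (β j))).toReal) :=
    hf (ENNReal.toReal_mono hfinm hmeasle)
  exact hle.trans (le_ciSup (f := fun m : Fin n =>
    f ((volume (S (β m) \ ⋃ (j : Fin n) (_ : j < m), S (β j))).toReal))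
    (Set.Finite.bddAbove (Set.finite_range _)) m₀)
end

section
/- Let n ≥ 1, let q_1, …, q_n be positive integers with ∑_{i=1}^n q_i = 2Q, let k be an integer with 1 ≤ k ≤ n, and let N be an integer with 2^{N−1} > 2^n·Q + k. Define ℓ_i = 2^n·q_i + 1 for i = 1, …, n, L = ∑_{i=1}^n ℓ_i = 2^{n+1}Q + n, and the n+2 intervals I_i = [∑_{j<i} ℓ_j, ∑_{j≤i} ℓ_j) for i = 1, …, n, I_{n+1} = [L, L + 2^N − 2^n·Q − k), and I_{n+2} = [0, 2^N + 2^n·Q + n − k). Let f : ℝ → ℝ be given by f(x) = 0 if x = 2^m for some natural number m, and f(x) = x otherwise. If there exists a subset J ⊆ {1, …, n} with |J| = k and ∑_{j∈J} q_j = Q, then there exists an ordering of I_1, …, I_{n+2} whose cost is at most 2^n·Q + n − k. -/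
/-!
Let `J` be the given half-sum index set and `C = {1, …, n} \ J`, so that the intervals `I_i`,
`i ∈ C`, are pairwise disjoint of total length `2^n Q + n - k`. Every interval lies in the main
interval `I_{n+2}`, because `2^n Q + k ≤ 2^N`. Expose the `I_i`, `i ∈ C`, first,
at cost at most their lengths, then `I_{n+2}`, whose exposed part has measure exactly `2^N` and so
costs nothing; everything placed afterwards is already covered and costs `f 0 = 0`.
-/

open MeasureTheory

open Finset Equiv

theorem Finset.sum_attachFin {M : Type*} [AddCommMonoid M] {n : ℕ} (s : Finset ℕ)
    (h : ∀ m ∈ s, m < n) (g : ℕ → M) : ∑ i ∈ s.attachFin h, g i = ∑ j ∈ s, g j :=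
  sum_nbij (↑) (fun _ hi => (mem_attachFin h).1 hi) Fin.val_injective.injOn
    (fun j hj => ⟨⟨j, h j hj⟩, (mem_attachFin h).2 hj, rfl⟩) fun _ _ => rfl

theorem Equiv.Perm.exists_map_Iio_eq_and_apply_eq {N : ℕ} (s : Finset (Fin N)) {b : Fin N}
    (hb : b ∉ s) : ∃ (α : Perm (Fin N)) (p : Fin N), (Iio p).map α.toEmbedding = s ∧ α p = b := by
  set p : Fin N := ⟨#s, by simpa using card_lt_univ_of_notMem hb⟩
  obtain ⟨β, hβ⟩ := Perm.exists_map_finset_eq (Iio p) s (by simp [p])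
  have hβs : ∀ x ∈ Iio p, β x ∈ s := fun x hx => hβ ▸ mem_map_of_mem _ hx
  refine ⟨swap (β p) b * β, p, ?_, by simp⟩
  rw [← hβ, map_eq_image, map_eq_image]
  refine image_congr fun x hx => swap_apply_of_ne_of_ne ?_ ?_
  · exact β.injective.ne (mem_Iio.1 hx).ne
  · exact ne_of_mem_of_not_mem (hβs x hx) hb

theorem MeasureTheory.toReal_measure_sdiff_biUnion {Ω ι : Type*} [MeasurableSpace Ω] (μ : Measure Ω)
    {s : Finset ι} {S : ι → Set Ω} {B : Set Ω} (hB : μ B ≠ ⊤) (hsub : ∀ i ∈ s, S i ⊆ B)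
    (hmeas : ∀ i ∈ s, MeasurableSet (S i)) (hdisj : (s : Set ι).PairwiseDisjoint S) :
    (μ (B \ ⋃ i ∈ s, S i)).toReal = (μ B).toReal - ∑ i ∈ s, (μ (S i)).toReal := by
  have hU : ⋃ i ∈ s, S i ⊆ B := Set.iUnion₂_subset hsub
  have hUfin : μ (⋃ i ∈ s, S i) ≠ ⊤ := ne_top_of_le_ne_top hB (measure_mono hU)
  rw [measure_sdiff hU (s.measurableSet_biUnion hmeas).nullMeasurableSet hUfin,
    ENNReal.toReal_sub_of_le (measure_mono hU) hB, measure_biUnion_finset hdisj hmeas,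
    ENNReal.toReal_sum fun i hi => ne_top_of_le_ne_top hB (measure_mono (hsub i hi))]

theorem exposedCost_le_of_forall_subset {N : ℕ} (S : Fin N → Set ℝ) (f : ℝ → ℝ) (α : Perm (Fin N))
    (p : Fin N) (hcover : ∀ i, S i ⊆ S (α p)) (hfin : volume (S (α p)) ≠ ⊤) (hf0 : f 0 = 0)
    (hf : ∀ x, 0 ≤ x → f x ≤ x) :
    exposedCost S f α ≤ ∑ k ∈ Iio p, (volume (S (α k))).toReal
      + f (volume (S (α p) \ ⋃ (j) (_ : j < p), S (α j))).toReal := by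
  set E : Fin N → ℝ := fun k => (volume (S (α k) \ ⋃ (j) (_ : j < k), S (α j))).toReal
  have hE : ∀ k, f (E k) ≤
      (if k < p then (volume (S (α k))).toReal else 0) + if k = p then f (E p) else 0 := by
    intro k
    rcases lt_trichotomy k p with hk | rfl | hk
    · rw [if_pos hk, if_neg hk.ne, add_zero]
      exact (hf _ ENNReal.toReal_nonneg).trans <| ENNReal.toReal_mono
        (ne_top_of_le_ne_top hfin (measure_mono (hcover _))) (measure_mono Set.sdiff_subset)
    · simp
    · have hempty : S (α k) \ ⋃ (j) (_ : j < k), S (α j) = ∅ :=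
        Set.sdiff_eq_empty.2 ((hcover _).trans
          (Set.subset_iUnion₂ (s := fun j (_ : j < k) => S (α j)) p hk))
      simp [E, hempty, hf0, hk.ne', not_lt.2 hk.le]
  calc exposedCost S f α = ∑ k, f (E k) := rfl
    _ ≤ _ := sum_le_sum fun k _ => hE k
    _ = _ := by
      rw [sum_add_distrib, ← sum_filter, filter_gt_eq_Iio, sum_ite_eq', if_pos (mem_univ p)]

theorem exists_exposedCost_le {N : ℕ} (S : Fin N → Set ℝ) (f : ℝ → ℝ) (s : Finset (Fin N))
    {b : Fin N} (hb : b ∉ s) (hmeas : ∀ i ∈ s, MeasurableSet (S i))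
    (hdisj : (s : Set (Fin N)).PairwiseDisjoint S) (hcover : ∀ i, S i ⊆ S b)
    (hfin : volume (S b) ≠ ⊤) (hf0 : f 0 = 0) (hf : ∀ x, 0 ≤ x → f x ≤ x) :
    ∃ α : Perm (Fin N), exposedCost S f α ≤ ∑ i ∈ s, (volume (S i)).toReal
      + f ((volume (S b)).toReal - ∑ i ∈ s, (volume (S i)).toReal) := by
  obtain ⟨α, p, rfl, rfl⟩ := Perm.exists_map_Iio_eq_and_apply_eq s hb
  have hU : ⋃ (j) (_ : j < p), S (α j) = ⋃ i ∈ (Iio p).map α.toEmbedding, S i := by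
    rw [map_eq_image, set_biUnion_finset_image]; simp
  refine ⟨α, ?_⟩
  rw [← toReal_measure_sdiff_biUnion volume hfin (fun i _ => hcover i) hmeas hdisj, ← hU, sum_map]
  exact exposedCost_le_of_forall_subset S f α p hcover hfin hf0 hf

section PartialSums

variable {m n : ℕ} {ℓ : ℕ → ℕ} {S : Fin m → Set ℝ} {s : Finset (Fin m)}

theorem Ico_partialSum_subset {i : ℕ} (hi : i < n) {M : ℝ}
    (hM : ((∑ j ∈ range n, ℓ j : ℕ) : ℝ) ≤ M) :
    Set.Ico ((∑ j ∈ range i, ℓ j : ℕ) : ℝ) ((∑ j ∈ range (i + 1), ℓ j : ℕ) : ℝ) ⊆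
      Set.Ico 0 M :=
  Set.Ico_subset_Ico (Nat.cast_nonneg _) <| le_trans (by gcongr; omega) hM

theorem pairwiseDisjoint_of_eq_Ico_partialSum
    (hS : ∀ i : Fin m, (i : ℕ) < n →
      S i = Set.Ico ((∑ j ∈ range i, ℓ j : ℕ) : ℝ) ((∑ j ∈ range (i + 1), ℓ j : ℕ) : ℝ))
    (hs : ∀ i ∈ s, (i : ℕ) < n) : (s : Set (Fin m)).PairwiseDisjoint S := by
  intro i hi j hj hij
  rw [Function.onFun, hS i (hs i hi), hS j (hs j hj)]
  exact Monotone.pairwise_disjoint_on_Ico_succ (f := fun i => ((∑ j ∈ range i, ℓ j : ℕ) : ℝ))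
    (monotone_nat_of_le_succ fun i => by simp [sum_range_succ]) (Fin.val_injective.ne hij)

theorem sum_volume_of_eq_Ico_partialSum
    (hS : ∀ i : Fin m, (i : ℕ) < n →
      S i = Set.Ico ((∑ j ∈ range i, ℓ j : ℕ) : ℝ) ((∑ j ∈ range (i + 1), ℓ j : ℕ) : ℝ))
    (hs : ∀ i ∈ s, (i : ℕ) < n) : ∑ i ∈ s, (volume (S i)).toReal = ∑ i ∈ s, (ℓ i : ℝ) :=
  sum_congr rfl fun i hi => by simp [hS i (hs i hi), sum_range_succ]

end PartialSums

theorem sum_eq_two_pow_mul_sum_add_card {n : ℕ} {q ℓ : ℕ → ℕ}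
    (hℓ : ∀ i, ℓ i = 2 ^ n * q i + 1) (A : Finset ℕ) :
    ∑ j ∈ A, ℓ j = 2 ^ n * ∑ j ∈ A, q j + #A := by
  simp [hℓ, sum_add_distrib, mul_sum]

theorem stmt_13_general (n Q k N : ℕ)
    (q : ℕ → ℕ)
    (hQ : ∑ i ∈ Finset.range n, q i = 2 * Q)
    (hkn : k ≤ n)
    (hN : 2 ^ n * Q + k < 2 ^ (N - 1))
    (ℓ : ℕ → ℕ) (hℓ : ∀ i, ℓ i = 2 ^ n * q i + 1)
    (L : ℕ) (hL : L = ∑ i ∈ Finset.range n, ℓ i)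
    (S : Fin (n + 2) → Set ℝ)
    (hSelem : ∀ i : Fin (n + 2), (i : ℕ) < n →
      S i = Set.Ico ((∑ j ∈ Finset.range (i : ℕ), ℓ j : ℕ) : ℝ)
                    ((∑ j ∈ Finset.range ((i : ℕ) + 1), ℓ j : ℕ) : ℝ))
    (hSdummy : ∀ i : Fin (n + 2), (i : ℕ) = n →
      S i = Set.Ico (L : ℝ) ((L : ℝ) + ((2 : ℝ) ^ N - 2 ^ n * Q - k)))
    (hSmain : ∀ i : Fin (n + 2), (i : ℕ) = n + 1 →
      S i = Set.Ico (0 : ℝ) ((2 : ℝ) ^ N + 2 ^ n * Q + n - k))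
    (f : ℝ → ℝ)
    (hfpow : ∀ x : ℝ, (∃ m : ℕ, x = 2 ^ m) → f x = 0)
    (hfother : ∀ x : ℝ, (¬ ∃ m : ℕ, x = 2 ^ m) → f x = x)
    (hJ : ∃ J : Finset ℕ, J ⊆ Finset.range n ∧ J.card = k ∧ ∑ j ∈ J, q j = Q) :
    ∃ α : Equiv.Perm (Fin (n + 2)),
      exposedCost S f α ≤ (2 : ℝ) ^ n * Q + n - k := by
  obtain ⟨J, hJn, rfl, hJQ⟩ := hJ
  set M : ℝ := 2 ^ N + 2 ^ n * Q + n - #J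
  have hmain : S (Fin.last (n + 1)) = Set.Ico 0 M := hSmain _ rfl
  have hLM : (L : ℝ) + (2 ^ N - 2 ^ n * Q - #J) = M := by
    rw [hL, sum_eq_two_pow_mul_sum_add_card hℓ, hQ, card_range]; push_cast; ring
  have hN' : (2 : ℝ) ^ n * Q + #J ≤ 2 ^ N := by
    exact_mod_cast hN.le.trans (Nat.pow_le_pow_right two_pos (N.sub_le 1))
  have hcover : ∀ i, S i ⊆ S (Fin.last (n + 1)) := by
    intro i
    rw [hmain]
    rcases (by omega : (i : ℕ) < n ∨ (i : ℕ) = n ∨ (i : ℕ) = n + 1) with hi | hi | hi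
    · exact hSelem i hi ▸ Ico_partialSum_subset hi (by rw [← hL]; linarith)
    · exact hSdummy i hi ▸ Set.Ico_subset_Ico (Nat.cast_nonneg L) hLM.le
    · exact hSmain i hi ▸ subset_rfl
  let s : Finset (Fin (n + 2)) := (range n \ J).attachFin fun j hj => by simp at hj; omega
  have hs : ∀ i ∈ s, (i : ℕ) < n := fun i hi => by simp [s] at hi; omega
  have hsum : ∑ i ∈ s, (volume (S i)).toReal = 2 ^ n * Q + n - #J := by
    have hCq : ∑ j ∈ range n \ J, q j = Q := by have := sum_sdiff hJn (f := q); omega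
    rw [sum_volume_of_eq_Ico_partialSum hSelem hs, sum_attachFin _ _ fun j => (ℓ j : ℝ),
      ← Nat.cast_sum, sum_eq_two_pow_mul_sum_add_card hℓ, hCq, card_sdiff_of_subset hJn, card_range]
    push_cast [hkn]; ring
  obtain ⟨α, hα⟩ := exists_exposedCost_le S f s (b := Fin.last (n + 1)) (by simp [s])
    (fun i hi => hSelem i (hs i hi) ▸ measurableSet_Ico)
    (pairwiseDisjoint_of_eq_Ico_partialSum hSelem hs) hcover (hmain ▸ measure_Ico_lt_top.ne)
    (hfother 0 fun ⟨m, hm⟩ => pow_ne_zero m two_ne_zero hm.symm)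
    (fun x hx => by by_cases h : ∃ m : ℕ, x = 2 ^ m <;> simp [hfpow, hfother, h, hx])
  refine ⟨α, hα.trans ?_⟩
  rw [hsum, hmain, Real.volume_Ico, ENNReal.toReal_ofReal (by linarith), hfpow _ ⟨N, by ring⟩]
  simp

/-- YES-instance direction of the PARTITION reduction: if there is an index set `J` of
cardinality `k` with `∑_{j ∈ J} q_j = Q`, then some ordering of the `n + 2` constructed
intervals (the `n` element-intervals, the dummy-interval and the main-interval) has cost
at most `2^n·Q + n - k`, where `f` vanishes on powers of two and is the identity
elsewhere. -/
theorem stmt_13 (n Q k N : ℕ) (hn : 1 ≤ n)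
    (q : ℕ → ℕ) (hq : ∀ i < n, 0 < q i)
    (hQ : ∑ i ∈ Finset.range n, q i = 2 * Q)
    (hk1 : 1 ≤ k) (hkn : k ≤ n)
    (hN : 2 ^ n * Q + k < 2 ^ (N - 1))
    (ℓ : ℕ → ℕ) (hℓ : ∀ i, ℓ i = 2 ^ n * q i + 1)
    (L : ℕ) (hL : L = ∑ i ∈ Finset.range n, ℓ i)
    (S : Fin (n + 2) → Set ℝ)
    (hSelem : ∀ i : Fin (n + 2), (i : ℕ) < n →
      S i = Set.Ico ((∑ j ∈ Finset.range (i : ℕ), ℓ j : ℕ) : ℝ)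
                    ((∑ j ∈ Finset.range ((i : ℕ) + 1), ℓ j : ℕ) : ℝ))
    (hSdummy : ∀ i : Fin (n + 2), (i : ℕ) = n →
      S i = Set.Ico (L : ℝ) ((L : ℝ) + ((2 : ℝ) ^ N - 2 ^ n * Q - k)))
    (hSmain : ∀ i : Fin (n + 2), (i : ℕ) = n + 1 →
      S i = Set.Ico (0 : ℝ) ((2 : ℝ) ^ N + 2 ^ n * Q + n - k))
    (f : ℝ → ℝ)
    (hfpow : ∀ x : ℝ, (∃ m : ℕ, x = 2 ^ m) → f x = 0)
    (hfother : ∀ x : ℝ, (¬ ∃ m : ℕ, x = 2 ^ m) → f x = x)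
    (hJ : ∃ J : Finset ℕ, J ⊆ Finset.range n ∧ J.card = k ∧ ∑ j ∈ J, q j = Q) :
    ∃ α : Equiv.Perm (Fin (n + 2)),
      exposedCost S f α ≤ (2 : ℝ) ^ n * Q + n - k :=
  stmt_13_general n Q k N q hQ hkn hN ℓ hℓ L hL S hSelem hSdummy hSmain f hfpow hfother hJ
end

section
/- Let n ≥ 1, let q_1, …, q_n be positive integers with ∑_{i=1}^n q_i = 2Q, let k be an integer with 1 ≤ k ≤ n, and let N be an integer with 2^{N−1} > 2^n·Q + k. Then for every subset T ⊆ {1, …, n}, writing s = ∑_{i∈T} q_i and t = |T|: if (2^N − 2^n·Q − k) + 2^n·s + t equals 2^m for some natural number m, then m = N, s = Q, and t = k. -/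
/-!
Put `A = 2^n Q + k` and `B = 2^n s + t`, so the exposed length is `2^N - A + B`. Since
`2A < 2^N` and (as `Q ≥ 1`) `B < A + 2^N`, it lies strictly between `2^(N-1)` and `2^(N+1)`, so a power of
two equal to it must be `2^N`, forcing `B = A`. As `t, k ≤ n < 2^n`, comparing base-`2^n`
digits of `B = A` gives `s = Q` and `t = k`.
-/

theorem Nat.eq_and_eq_of_mul_add_eq_mul_add {a b c d e : ℕ} (hc : c < a) (he : e < a)
    (h : a * b + c = a * d + e) : b = d ∧ c = e := by
  have ha : 0 < a := by omega
  have hdiv := congrArg (· / a) h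
  have hmod := congrArg (· % a) h
  simp only [Nat.mul_add_div ha, Nat.div_eq_of_lt hc, Nat.div_eq_of_lt he, Nat.mul_add_mod,
    Nat.mod_eq_of_lt hc, Nat.mod_eq_of_lt he, add_zero] at hdiv hmod
  exact ⟨hdiv, hmod⟩

theorem Nat.eq_and_eq_of_two_pow_sub_add_eq_two_pow {N A B m : ℕ} (hA : 2 * A < 2 ^ N)
    (hB : B < A + 2 ^ N) (h : 2 ^ N - A + B = 2 ^ m) : m = N ∧ B = A := by
  have hlow : 2 ^ N < 2 ^ (m + 1) := by rw [pow_succ]; omega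
  have hup : 2 ^ m < 2 ^ (N + 1) := by rw [pow_succ]; omega
  rw [Nat.pow_lt_pow_iff_right (by norm_num)] at hlow hup
  obtain rfl : m = N := by omega
  omega

theorem stmt_16_general (n Q k N : ℕ) (hn : 1 ≤ n) (q : Fin n → ℕ) (hq : ∀ i, 0 < q i)
    (hQ : ∑ i, q i = 2 * Q) (hkn : k ≤ n)
    (hN : 2 ^ n * Q + k < 2 ^ (N - 1)) :
    ∀ T : Finset (Fin n), ∀ m : ℕ,
      (2 ^ N - 2 ^ n * Q - k) + 2 ^ n * (∑ i ∈ T, q i) + T.card = 2 ^ m →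
      m = N ∧ (∑ i ∈ T, q i) = Q ∧ T.card = k := by
  intro T m h
  have hQpos : 0 < Q := by
    have : 0 < ∑ i, q i := Finset.sum_pos (fun i _ ↦ hq i) ⟨⟨0, hn⟩, Finset.mem_univ _⟩
    omega
  have hs : ∑ i ∈ T, q i ≤ 2 * Q := hQ ▸ Finset.sum_le_sum_of_subset T.subset_univ
  have ht : T.card ≤ n := by simpa using T.card_le_univ
  have hn2 : n < 2 ^ n := Nat.lt_two_pow_self
  have hQ2 : 2 ^ n ≤ 2 ^ n * Q := Nat.le_mul_of_pos_right _ hQpos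
  have hA : 2 * (2 ^ n * Q + k) < 2 ^ N := by
    cases N with
    | zero => simp at hN; omega
    | succ N => rw [pow_succ]; simp only [add_tsub_cancel_right] at hN; omega
  have hB : 2 ^ n * (∑ i ∈ T, q i) + T.card < 2 ^ n * Q + k + 2 ^ N := by
    nlinarith [Nat.mul_le_mul_left (2 ^ n) hs]
  rw [Nat.sub_sub, add_assoc] at h
  obtain ⟨rfl, hBA⟩ := Nat.eq_and_eq_of_two_pow_sub_add_eq_two_pow hA hB h
  exact ⟨rfl, Nat.eq_and_eq_of_mul_add_eq_mul_add (by omega) (by omega) hBA⟩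

/-- In the PARTITION reduction, if the exposed length of the main interval after the
dummy interval, i.e. `(2^N - 2^n·Q - k) + 2^n·s + t` with `s = ∑_{i ∈ T} q_i` and
`t = |T|`, is a power of two `2^m`, then necessarily `m = N`, `s = Q` and `t = k`. -/
theorem stmt_16 (n Q k N : ℕ) (hn : 1 ≤ n) (q : Fin n → ℕ) (hq : ∀ i, 0 < q i)
    (hQ : ∑ i, q i = 2 * Q) (hk1 : 1 ≤ k) (hkn : k ≤ n)
    (hN : 2 ^ n * Q + k < 2 ^ (N - 1)) :
    ∀ T : Finset (Fin n), ∀ m : ℕ,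
      (2 ^ N - 2 ^ n * Q - k) + 2 ^ n * (∑ i ∈ T, q i) + T.card = 2 ^ m →
      m = N ∧ (∑ i ∈ T, q i) = Q ∧ T.card = k :=
  stmt_16_general n Q k N hn q hq hQ hkn hN
end

section
/- Let x_1, …, x_n be pairwise distinct positive real numbers, consider the intervals I_j = [0, x_j) for j = 1, …, n, and let the cost function be f(x) = 2^x. Then an ordering α minimizes the cost if and only if x_{α(1)} < x_{α(2)} < … < x_{α(n)}; in particular, the ordering that sorts the intervals by increasing right endpoint is the unique optimal ordering. -/
/-!
With the running maximum `M₀ = 0`, `Mₖ = max Mₖ₋₁ x_{α k}`, the exposed part of the `k`-th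
interval is `[Mₖ₋₁, Mₖ)`, so the cost is `∑ₖ f (Mₖ - Mₖ₋₁)`. For `f = 2 ^ ·` we have
`f p + f q < f (p + q) + f 0` whenever `p, q > 0`, as `(2 ^ p - 1) (2 ^ q - 1) > 0`. Induct on
the last interval of an ordering: if it is the longest one, it is also last in the sorted
ordering and both orderings pay the same for it. Otherwise it exposes nothing and costs `f 0`,
while removing it from the sorted ordering merges two increments and so saves less than `f 0`.
-/

open MeasureTheory

/-- The cost of laying the intervals `[0, a)`, `a ∈ l`, in order on top of `[0, m)`. -/
noncomputable def stackCost (f : ℝ → ℝ) : ℝ → List ℝ → ℝ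
  | _, [] => 0
  | m, a :: t => f (max m a - m) + stackCost f (max m a) t

lemma le_foldl_max_of_mem {m b : ℝ} {t : List ℝ} (hb : b ∈ m :: t) : b ≤ t.foldl max m := by
  induction t generalizing m b with
  | nil => simp_all
  | cons c t ih =>
    rw [List.foldl_cons]
    obtain rfl | rfl | hb : b = m ∨ b = c ∨ b ∈ t := by simpa using hb
    · exact (le_max_left _ c).trans (ih (m := max _ c) List.mem_cons_self)
    · exact (le_max_right m _).trans (ih (m := max m _) List.mem_cons_self)
    · exact ih (List.mem_cons_of_mem _ hb)

section

variable {f : ℝ → ℝ}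

lemma stackCost_append_singleton (m a : ℝ) (t : List ℝ) :
    stackCost f m (t ++ [a]) =
      stackCost f m t + f (max (t.foldl max m) a - t.foldl max m) := by
  induction t generalizing m with
  | nil => simp [stackCost]
  | cons b t ih => simp only [List.cons_append, stackCost, ih, List.foldl_cons]; ring

lemma stackCost_append_cons_lt (hf : ∀ p q, 0 < p → 0 < q → f p + f q < f (p + q) + f 0) :
    ∀ (u : List ℝ) (m v : ℝ) (w : List ℝ), w ≠ [] → (m :: (u ++ v :: w)).Pairwise (· < ·) →
      stackCost f m (u ++ v :: w) < stackCost f m (u ++ w) + f 0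
  | [], m, v, w, hw, hs => by
    obtain ⟨b, w, rfl⟩ := List.exists_cons_of_ne_nil hw
    have hmv : m < v := List.rel_of_pairwise_cons hs (by simp)
    have hvb : v < b := List.rel_of_pairwise_cons hs.of_cons (by simp)
    simp only [List.nil_append, stackCost, max_eq_right hmv.le, max_eq_right hvb.le,
      max_eq_right (hmv.trans hvb).le]
    have := hf (v - m) (b - v) (sub_pos.2 hmv) (sub_pos.2 hvb)
    rw [sub_add_sub_cancel'] at this
    linarith
  | a :: u, m, v, w, hw, hs => by
    have hma : m < a := List.rel_of_pairwise_cons hs (by simp)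
    have := stackCost_append_cons_lt hf u a v w hw hs.of_cons
    simp only [List.cons_append, stackCost, max_eq_right hma.le]
    linarith

lemma stackCost_lt_of_perm (hf : ∀ p q, 0 < p → 0 < q → f p + f q < f (p + q) + f 0)
    (m : ℝ) (l : List ℝ) :
    ∀ s : List ℝ, (m :: s).Pairwise (· < ·) → l.Perm s → l ≠ s →
      stackCost f m s < stackCost f m l := by
  induction l using List.reverseRecOn with
  | nil => intro s _ hperm hne; exact absurd hperm.nil_eq hne
  | append_singleton t a ih =>
    intro s hs hperm hne
    obtain ⟨s, g, rfl⟩ : ∃ s' g, s = s' ++ [g] := by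
      rcases List.eq_nil_or_concat s with rfl | ⟨s', g, rfl⟩
      · exact absurd hperm.eq_nil (by simp)
      · exact ⟨s', g, List.concat_eq_append ..⟩
    by_cases hag : a = g
    · subst hag
      have hst : t.Perm s := (List.perm_append_right_iff [a]).mp hperm
      have := ih s (hs.sublist (by simp)) hst (by rintro rfl; exact hne rfl)
      rw [stackCost_append_singleton, stackCost_append_singleton, hst.foldl_eq]
      linarith
    have has : a ∈ s := by simpa [hag] using hperm.subset (by simp : a ∈ t ++ [a])
    obtain ⟨u, w, rfl⟩ := List.append_of_mem has
    have hsplit : u ++ a :: w ++ [g] = u ++ a :: (w ++ [g]) := by simp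
    rw [hsplit] at hs hperm ⊢
    have hrest : t.Perm (u ++ (w ++ [g])) :=
      (List.perm_append_singleton a t).symm.trans (hperm.trans List.perm_middle) |>.cons_inv
    have hrest_le : stackCost f m (u ++ (w ++ [g])) ≤ stackCost f m t := by
      by_cases heq : t = u ++ (w ++ [g])
      · rw [heq]
      · refine (ih _ (hs.sublist ?_) hrest heq).le
        exact ((List.sublist_cons_self a _).append_left u).cons_cons m
    have hlast : stackCost f m (t ++ [a]) = stackCost f m t + f 0 := by
      have hag_lt : a < g := List.rel_of_pairwise_cons
        (List.pairwise_append.mp hs.of_cons).2.1 (by simp)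
      have hg : g ≤ t.foldl max m :=
        le_foldl_max_of_mem (List.mem_cons_of_mem _ (hrest.symm.subset (by simp)))
      rw [stackCost_append_singleton, max_eq_left (hag_lt.le.trans hg), sub_self]
    have := stackCost_append_cons_lt hf u m a (w ++ [g]) (by simp) hs
    linarith

end

lemma Fin.biUnion_lt_succ {α : Type*} {n : ℕ} (s : Fin (n + 1) → Set α) (k : Fin n) :
    ⋃ (j : Fin (n + 1)) (_ : j < k.succ), s j = s 0 ∪ ⋃ (j : Fin n) (_ : j < k), s j.succ := by
  ext t
  simp only [Set.mem_iUnion, Set.mem_union, Fin.exists_fin_succ, Fin.succ_pos,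
    Fin.succ_lt_succ_iff, exists_prop, true_and]

lemma Set.Ico_zero_union_Ico_zero (a b : ℝ) :
    Set.Ico (0 : ℝ) a ∪ Set.Ico 0 b = Set.Ico 0 (max a b) := by
  ext t
  simp only [Set.mem_union, Set.mem_Ico, lt_max_iff]
  tauto

lemma toReal_volume_Ico_zero_diff {m : ℝ} (hm : 0 ≤ m) (a : ℝ) :
    (volume (Set.Ico 0 a \ Set.Ico 0 m)).toReal = max m a - m := by
  have : Set.Ico 0 a \ Set.Ico 0 m = Set.Ico m a := by
    ext t
    simp only [Set.mem_sdiff, Set.mem_Ico, not_and, not_lt]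
    exact ⟨fun h => ⟨h.2 h.1.1, h.1.2⟩, fun h => ⟨⟨hm.trans h.1, h.2⟩, fun _ => h.1⟩⟩
  rw [this, Real.volume_Ico, ENNReal.toReal_ofReal', max_comm m a, ← max_sub_sub_right, sub_self]

lemma sum_exposed_Ico_zero_eq_stackCost (f : ℝ → ℝ) :
    ∀ (n : ℕ) (y : Fin n → ℝ) (m : ℝ), 0 ≤ m →
      ∑ k : Fin n, f (volume (Set.Ico 0 (y k) \
        (Set.Ico 0 m ∪ ⋃ (j : Fin n) (_ : j < k), Set.Ico 0 (y j)))).toReal =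
      stackCost f m (List.ofFn y)
  | 0, _, _, _ => by simp [stackCost]
  | n + 1, y, m, hm => by
    have hunion (k : Fin n) : Set.Ico 0 m ∪ ⋃ (j : Fin (n + 1)) (_ : j < k.succ), Set.Ico 0 (y j) =
        Set.Ico 0 (max m (y 0)) ∪ ⋃ (j : Fin n) (_ : j < k), Set.Ico 0 (y j.succ) := by
      rw [Fin.biUnion_lt_succ, ← Set.union_assoc, Set.Ico_zero_union_Ico_zero]
    simp only [Fin.sum_univ_succ, hunion, Fin.not_lt_zero, Set.iUnion_of_empty,
      Set.iUnion_empty, Set.union_empty, toReal_volume_Ico_zero_diff hm]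
    rw [sum_exposed_Ico_zero_eq_stackCost f n (fun j => y j.succ) _ (hm.trans (le_max_left _ _)),
      List.ofFn_succ, stackCost]

lemma exposedCost_Ico_zero_eq_stackCost {n : ℕ} (f : ℝ → ℝ) (x : Fin n → ℝ)
    (α : Equiv.Perm (Fin n)) :
    exposedCost (fun j => Set.Ico 0 (x j)) f α = stackCost f 0 (List.ofFn (x ∘ α)) := by
  rw [← sum_exposed_Ico_zero_eq_stackCost f n (x ∘ α) 0 le_rfl, exposedCost]
  simp only [Set.Ico_self, Set.empty_union, Function.comp_apply]

lemma Tuple.sort_eq_iff_strictMono {n : ℕ} {α : Type*} [LinearOrder α] {x : Fin n → α}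
    (hx : Function.Injective x) (σ : Equiv.Perm (Fin n)) :
    σ = Tuple.sort x ↔ StrictMono (x ∘ σ) := by
  rw [Tuple.eq_sort_iff]
  refine ⟨fun h => h.1.strictMono_of_injective (hx.comp σ.injective), fun h => ⟨h.monotone, ?_⟩⟩
  intro i j hij hxij
  exact absurd (σ.injective (hx hxij)) hij.ne

lemma exposedCost_sort_lt {f : ℝ → ℝ}
    (hf : ∀ p q, 0 < p → 0 < q → f p + f q < f (p + q) + f 0) {n : ℕ} {x : Fin n → ℝ}
    (hpos : ∀ i, 0 < x i) (hx : Function.Injective x) {α : Equiv.Perm (Fin n)}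
    (hα : α ≠ Tuple.sort x) :
    exposedCost (fun j => Set.Ico 0 (x j)) f (Tuple.sort x) <
      exposedCost (fun j => Set.Ico 0 (x j)) f α := by
  rw [exposedCost_Ico_zero_eq_stackCost, exposedCost_Ico_zero_eq_stackCost]
  have hsort := (Tuple.sort_eq_iff_strictMono hx _).mp rfl
  refine stackCost_lt_of_perm hf 0 _ _ ?_ ?_ ?_
  · simpa [List.pairwise_ofFn, hpos] using fun i j (hij : i < j) => hsort hij
  · exact (α.ofFn_comp_perm x).trans (Tuple.sort x |>.ofFn_comp_perm x).symm
  · intro h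
    exact hα (Equiv.ext fun i => hx (congrFun (List.ofFn_injective h) i))

lemma forall_exposedCost_le_iff_eq_sort {f : ℝ → ℝ}
    (hf : ∀ p q, 0 < p → 0 < q → f p + f q < f (p + q) + f 0) {n : ℕ} {x : Fin n → ℝ}
    (hpos : ∀ i, 0 < x i) (hx : Function.Injective x) (α : Equiv.Perm (Fin n)) :
    (∀ β, exposedCost (fun j => Set.Ico 0 (x j)) f α ≤
      exposedCost (fun j => Set.Ico 0 (x j)) f β) ↔ α = Tuple.sort x := by
  refine ⟨fun h => by_contra fun hα => (h _).not_gt (exposedCost_sort_lt hf hpos hx hα), ?_⟩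
  rintro rfl β
  rcases eq_or_ne β (Tuple.sort x) with rfl | hβ
  · exact le_rfl
  · exact (exposedCost_sort_lt hf hpos hx hβ).le

lemma two_rpow_add_lt {p q : ℝ} (hp : 0 < p) (hq : 0 < q) :
    (2 : ℝ) ^ p + 2 ^ q < 2 ^ (p + q) + 2 ^ (0 : ℝ) := by
  have hp' := Real.one_lt_rpow one_lt_two hp
  have hq' := Real.one_lt_rpow one_lt_two hq
  rw [Real.rpow_add two_pos, Real.rpow_zero]
  nlinarith

/-- For pairwise distinct positive reals `x_j`, the intervals `I_j = [0, x_j)` and the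
cost function `f t = 2 ^ t`, an ordering is optimal if and only if it sorts the intervals
by increasing right endpoint; in particular that sorting ordering is the unique optimal
ordering. -/
theorem stmt_17 (n : ℕ) (x : Fin n → ℝ) (hpos : ∀ i, 0 < x i)
    (hdist : ∀ i j : Fin n, i ≠ j → x i ≠ x j) :
    (∀ α : Equiv.Perm (Fin n),
      (∀ β : Equiv.Perm (Fin n),
        exposedCost (fun j => Set.Ico (0 : ℝ) (x j)) (fun t => (2 : ℝ) ^ t) α ≤
        exposedCost (fun j => Set.Ico (0 : ℝ) (x j)) (fun t => (2 : ℝ) ^ t) β) ↔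
      (∀ k l : Fin n, k < l → x (α k) < x (α l))) ∧
    ∃! α : Equiv.Perm (Fin n),
      ∀ β : Equiv.Perm (Fin n),
        exposedCost (fun j => Set.Ico (0 : ℝ) (x j)) (fun t => (2 : ℝ) ^ t) α ≤
        exposedCost (fun j => Set.Ico (0 : ℝ) (x j)) (fun t => (2 : ℝ) ^ t) β := by
  have hx : Function.Injective x := fun i j hij => by_contra fun hne => hdist i j hne hij
  have hopt := forall_exposedCost_le_iff_eq_sort (fun _ _ => two_rpow_add_lt) hpos hx
  exact ⟨fun α => (hopt α).trans (Tuple.sort_eq_iff_strictMono hx α),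
    Tuple.sort x, (hopt _).mpr rfl, fun α => (hopt α).mp⟩
end
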